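/- arXiv:1205.7036 — 5 statements merged into one kernel-verified Lean document; each statement's English description precedes it below -/
import Mathlib

section
/- Let H be a stabilizer matrix on n qubits with r rows, let S be its row space, and let E ⊆ Fin n. Then rank(H) + rank(H_E) ≤ 2·|E| + rank(H_Ē), and the cardinality of N(S)_E = {w : σ(w) = 0 and supp(w) ⊆ E} equals 2^(2|E| − rank(H) + rank(H_Ē) − rank(H_E)) times the cardinality of S_E = {s ∈ S : supp(s) ⊆ E}. (Consequently, each coset of S consisting of zero-syndrome errors covered by the erasure E splits N(S)_E into 2^(2|E| − rank(H) + rank(H_Ē) − rank(H_E)) classes of equal size |S_E|, which is the counting content of the conditional entropy computation H(X | E = v, Σ = y) = 2|v| − rank H + rank H_v̄ − rank H_v.) -/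
open Finset

/-- The symplectic form on `F₂^(Fin n × Fin 2)`. -/
def sympl {n : ℕ} (u v : Fin n × Fin 2 → ZMod 2) : ZMod 2 :=
  ∑ i : Fin n, (u (i, 0) * v (i, 1) + u (i, 1) * v (i, 0))

/-- A stabilizer matrix: rows are pairwise orthogonal for the symplectic form. -/
def IsStabilizerMatrix {ρ : Type*} {n : ℕ} (H : Matrix ρ (Fin n × Fin 2) (ZMod 2)) : Prop :=
  ∀ a b : ρ, sympl (H a) (H b) = 0

/-- The support of a Pauli error. -/
def psupp {n : ℕ} (w : Fin n × Fin 2 → ZMod 2) : Finset (Fin n) :=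
  Finset.univ.filter fun i => ¬(w (i, 0) = 0 ∧ w (i, 1) = 0)

/-- The syndrome of a Pauli error. -/
def syndrome {ρ : Type*} {n : ℕ} (H : Matrix ρ (Fin n × Fin 2) (ZMod 2))
    (w : Fin n × Fin 2 → ZMod 2) : ρ → ZMod 2 :=
  fun a => sympl (H a) w

/-- The row space `S` of a stabilizer matrix. -/
def rowSpace {ρ : Type*} {n : ℕ} (H : Matrix ρ (Fin n × Fin 2) (ZMod 2)) :
    Submodule (ZMod 2) (Fin n × Fin 2 → ZMod 2) :=
  Submodule.span (ZMod 2) (Set.range fun a => H a)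

/-- The matrix `H_E`: columns outside the erasure `E` are replaced by zero
(this does not change the rank, so `(erased H E).rank` is the rank of the submatrix
of erased columns). -/
def erased {ρ : Type*} {n : ℕ} (H : Matrix ρ (Fin n × Fin 2) (ZMod 2)) (E : Finset (Fin n)) :
    Matrix ρ (Fin n × Fin 2) (ZMod 2) :=
  Matrix.of fun a p => if p.1 ∈ E then H a p else 0

/-- The decoding error probability of a decoder `D` over the quantum erasure channel
of probability `p`. -/
noncomputable def errProb {ρ : Type*} [Fintype ρ] {n : ℕ}
    (H : Matrix ρ (Fin n × Fin 2) (ZMod 2)) (p : ℝ)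
    (D : Finset (Fin n) → (ρ → ZMod 2) → ((Fin n × Fin 2 → ZMod 2) ⧸ rowSpace H)) : ℝ :=
  ∑ E : Finset (Fin n), p ^ E.card * (1 - p) ^ (n - E.card) *
    ((Nat.card {w : Fin n × Fin 2 → ZMod 2 |
        psupp w ⊆ E ∧ D E (syndrome H w) ≠ Submodule.Quotient.mk w} : ℝ) / 4 ^ E.card)

/-- `E_p[rank(H_Ē) − rank(H_E)]`. -/
noncomputable def rankDiffExp {ρ : Type*} [Fintype ρ] {n : ℕ}
    (H : Matrix ρ (Fin n × Fin 2) (ZMod 2)) (p : ℝ) : ℝ :=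
  ∑ E : Finset (Fin n), p ^ E.card * (1 - p) ^ (n - E.card) *
    (((erased H Eᶜ).rank : ℝ) - ((erased H E).rank : ℝ))

/-!
Inside the space `W_E` of errors supported on `E` (dimension `2|E|`), the syndrome map agrees
with that of `H_E`, so rank–nullity gives `dim N(S)_E = 2|E| − rank H_E`. Zeroing the coordinates
in `E` maps `S` onto the row space of `H_Ē` with kernel `S_E`, so `dim S_E = rank H − rank H_Ē`.
Rows of `H` commute, hence `S_E ⊆ N(S)_E`: this is the inequality, and the count compares
`2 ^ dim` of the two spaces.
-/

open Module LinearMap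

section Supported

variable (K : Type*) {ι : Type*} [Field K]

def supportedIn (s : Set ι) : Submodule K (ι → K) :=
  ⨅ i ∈ sᶜ, ker (proj i : (ι → K) →ₗ[K] K)

variable {K}

theorem mem_supportedIn {s : Set ι} {w : ι → K} : w ∈ supportedIn K s ↔ ∀ i ∉ s, w i = 0 := by
  simp [supportedIn, Submodule.mem_iInf]

theorem finrank_supportedIn [Fintype ι] (s : Set ι) : finrank K (supportedIn K s) = Nat.card s := by
  classical
  rw [supportedIn, (iInfKerProjEquiv K (fun _ => K) disjoint_compl_right (by simp)).finrank_eq,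
    finrank_fintype_fun_eq_card, Nat.card_eq_fintype_card]

noncomputable def indicatorLinearMap (s : Set ι) : (ι → K) →ₗ[K] (ι → K) where
  toFun := s.indicator
  map_add' := Set.indicator_add' s
  map_smul' c u := Set.indicator_const_smul s c u

variable (s : Set ι)

theorem indicatorLinearMap_apply (w : ι → K) : indicatorLinearMap s w = s.indicator w := rfl

theorem ker_indicatorLinearMap : ker (indicatorLinearMap (K := K) s) = supportedIn K sᶜ := by
  ext w
  simp only [mem_ker, indicatorLinearMap_apply, funext_iff, Pi.zero_apply,
    Set.indicator_apply_eq_zero, mem_supportedIn, Set.mem_compl_iff, not_not]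

theorem range_indicatorLinearMap : range (indicatorLinearMap (K := K) s) = supportedIn K s := by
  ext w
  rw [LinearMap.mem_range, mem_supportedIn]
  refine ⟨?_, fun hw => ⟨w, ?_⟩⟩
  · rintro ⟨u, rfl⟩ i hi
    exact Set.indicator_of_notMem hi u
  · exact Set.indicator_eq_self.mpr fun i hi => by_contra fun hs => hi (hw i hs)

end Supported

theorem Submodule.finrank_map_add_finrank_inf_ker {K V V₂ : Type*} [Field K] [AddCommGroup V]
    [Module K V] [FiniteDimensional K V] [AddCommGroup V₂] [Module K V₂]
    (f : V →ₗ[K] V₂) (W : Submodule K V) :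
    finrank K (W.map f) + finrank K ↥(W ⊓ ker f) = finrank K W := by
  rw [← range_domRestrict, ← (f.domRestrict W).finrank_range_add_finrank_ker, ker_domRestrict,
    (Submodule.equivSubtypeMap W _).finrank_eq, Submodule.map_comap_subtype]

section Qubits

variable {ρ : Type*} {n : ℕ}

theorem psupp_subset_iff_mem_supportedIn {E : Finset (Fin n)} {w : Fin n × Fin 2 → ZMod 2} :
    psupp w ⊆ E ↔ w ∈ supportedIn (ZMod 2) (Prod.fst ⁻¹' E) := by
  simp only [mem_supportedIn, Set.mem_preimage, Finset.mem_coe, Prod.forall, Fin.forall_fin_two,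
    subset_iff, psupp, mem_filter, mem_univ, true_and]
  exact forall_congr' fun i => by tauto

theorem natCard_preimage_fst (E : Finset (Fin n)) :
    Nat.card (Prod.fst ⁻¹' (E : Set (Fin n)) : Set (Fin n × Fin 2)) = 2 * E.card := by
  rw [← Set.prod_univ, Nat.card_congr (Equiv.Set.prod _ _), Nat.card_prod]
  simp [mul_comm]

theorem erased_apply (H : Matrix ρ (Fin n × Fin 2) (ZMod 2)) (E : Finset (Fin n)) (a : ρ) :
    erased H E a = indicatorLinearMap (Prod.fst ⁻¹' E) (H a) := by
  ext p
  by_cases hp : p.1 ∈ E <;> simp [erased, indicatorLinearMap_apply, hp]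

/-- Exchanging the `X` and `Z` parts turns the symplectic form into the dot product. -/
def swapXZ (n : ℕ) : (Fin n × Fin 2 → ZMod 2) ≃ₗ[ZMod 2] (Fin n × Fin 2 → ZMod 2) :=
  LinearEquiv.funCongrLeft (ZMod 2) (ZMod 2) ((Equiv.refl _).prodCongr (Equiv.addRight 1))

def syndromeLin (H : Matrix ρ (Fin n × Fin 2) (ZMod 2)) :
    (Fin n × Fin 2 → ZMod 2) →ₗ[ZMod 2] (ρ → ZMod 2) :=
  H.mulVecLin ∘ₗ (swapXZ n).toLinearMap

theorem syndromeLin_apply (H : Matrix ρ (Fin n × Fin 2) (ZMod 2)) (w : Fin n × Fin 2 → ZMod 2) :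
    syndromeLin H w = syndrome H w := by
  ext a
  simp only [syndromeLin, swapXZ, LinearMap.coe_comp, Function.comp_apply, LinearEquiv.coe_coe,
    LinearEquiv.funCongrLeft_apply, Matrix.mulVecLin_apply, Matrix.mulVec, dotProduct,
    Fintype.sum_prod_type, Fin.sum_univ_two, syndrome, sympl]
  refine sum_congr rfl fun i _ => ?_
  simp only [LinearMap.funLeft_apply, Equiv.prodCongr_apply, Equiv.coe_refl,
    Prod.map_apply, id_eq, Equiv.coe_addRight]
  rfl

theorem finrank_range_syndromeLin (H : Matrix ρ (Fin n × Fin 2) (ZMod 2)) :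
    finrank (ZMod 2) (range (syndromeLin H)) = H.rank := by
  rw [syndromeLin, range_comp_of_range_eq_top _ (LinearEquiv.range _), Matrix.rank]

theorem syndromeLin_erased (H : Matrix ρ (Fin n × Fin 2) (ZMod 2)) (E : Finset (Fin n)) :
    syndromeLin (erased H E) = syndromeLin H ∘ₗ indicatorLinearMap (Prod.fst ⁻¹' E) := by
  refine LinearMap.ext fun w => funext fun a => ?_
  simp only [LinearMap.comp_apply, syndromeLin_apply, syndrome, sympl, erased_apply,
    indicatorLinearMap_apply]
  refine sum_congr rfl fun i _ => ?_
  by_cases hi : i ∈ E <;> simp [hi]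

theorem finrank_map_syndromeLin_supportedIn (H : Matrix ρ (Fin n × Fin 2) (ZMod 2))
    (E : Finset (Fin n)) :
    finrank (ZMod 2) ((supportedIn (ZMod 2) (Prod.fst ⁻¹' E)).map (syndromeLin H)) =
      (erased H E).rank := by
  rw [← range_indicatorLinearMap, ← range_comp, ← syndromeLin_erased, finrank_range_syndromeLin]

theorem rowSpace_erased_compl (H : Matrix ρ (Fin n × Fin 2) (ZMod 2)) (E : Finset (Fin n)) :
    rowSpace (erased H Eᶜ) = (rowSpace H).map (indicatorLinearMap (Prod.fst ⁻¹' E)ᶜ) := by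
  rw [rowSpace, rowSpace, Submodule.map_span, ← Set.range_comp]
  congr 2
  funext a
  rw [Function.comp_apply, erased_apply]
  congr 1
  ext p
  simp

theorem finrank_rowSpace [Finite ρ] (H : Matrix ρ (Fin n × Fin 2) (ZMod 2)) :
    finrank (ZMod 2) (rowSpace H) = H.rank :=
  (Matrix.rank_eq_finrank_span_row H).symm

theorem rowSpace_le_ker_syndromeLin {H : Matrix ρ (Fin n × Fin 2) (ZMod 2)}
    (hH : IsStabilizerMatrix H) : rowSpace H ≤ ker (syndromeLin H) := by
  rw [rowSpace, Submodule.span_le]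
  rintro _ ⟨a, rfl⟩
  exact funext fun b => (congrFun (syndromeLin_apply H (H a)) b).trans (hH b a)

end Qubits

theorem natCard_eq_two_pow_finrank (M : Type*) [AddCommGroup M] [Module (ZMod 2) M]
    [Module.Finite (ZMod 2) M] : Nat.card M = 2 ^ finrank (ZMod 2) M := by
  rw [Module.natCard_eq_pow_finrank (K := ZMod 2), Nat.card_zmod]

section Covered

variable {ρ : Type*} {n : ℕ} (H : Matrix ρ (Fin n × Fin 2) (ZMod 2)) (E : Finset (Fin n))

def coveredNormalizer : Submodule (ZMod 2) (Fin n × Fin 2 → ZMod 2) :=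
  supportedIn (ZMod 2) (Prod.fst ⁻¹' E) ⊓ ker (syndromeLin H)

def coveredStabilizer : Submodule (ZMod 2) (Fin n × Fin 2 → ZMod 2) :=
  rowSpace H ⊓ supportedIn (ZMod 2) (Prod.fst ⁻¹' E)

theorem coe_coveredNormalizer :
    (coveredNormalizer H E : Set (Fin n × Fin 2 → ZMod 2)) =
      {w | syndrome H w = 0 ∧ psupp w ⊆ E} := by
  ext w
  simp only [coveredNormalizer, SetLike.mem_coe, Submodule.mem_inf, mem_ker, syndromeLin_apply,
    Set.mem_ofPred_eq, psupp_subset_iff_mem_supportedIn, and_comm]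

theorem coe_coveredStabilizer :
    (coveredStabilizer H E : Set (Fin n × Fin 2 → ZMod 2)) =
      {w | w ∈ rowSpace H ∧ psupp w ⊆ E} := by
  ext w
  simp only [coveredStabilizer, SetLike.mem_coe, Submodule.mem_inf, Set.mem_ofPred_eq,
    psupp_subset_iff_mem_supportedIn]

theorem rank_erased_add_finrank_coveredNormalizer :
    (erased H E).rank + finrank (ZMod 2) (coveredNormalizer H E) = 2 * E.card := by
  rw [← finrank_map_syndromeLin_supportedIn, coveredNormalizer,
    Submodule.finrank_map_add_finrank_inf_ker, finrank_supportedIn, natCard_preimage_fst]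

theorem rank_erased_compl_add_finrank_coveredStabilizer [Finite ρ] :
    (erased H Eᶜ).rank + finrank (ZMod 2) (coveredStabilizer H E) = H.rank := by
  have h := (rowSpace H).finrank_map_add_finrank_inf_ker (indicatorLinearMap (Prod.fst ⁻¹' E)ᶜ)
  rwa [← rowSpace_erased_compl, ker_indicatorLinearMap, compl_compl, finrank_rowSpace,
    finrank_rowSpace] at h

theorem coveredStabilizer_le_coveredNormalizer (hH : IsStabilizerMatrix H) :
    coveredStabilizer H E ≤ coveredNormalizer H E := by
  rw [coveredStabilizer, coveredNormalizer, inf_comm]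
  exact inf_le_inf_left _ (rowSpace_le_ker_syndromeLin hH)

end Covered

theorem counting_zero_syndrome_errors_covered_by_erasure
    {r n : ℕ} (H : Matrix (Fin r) (Fin n × Fin 2) (ZMod 2))
    (hH : IsStabilizerMatrix H) (E : Finset (Fin n)) :
    H.rank + (erased H E).rank ≤ 2 * E.card + (erased H Eᶜ).rank ∧
    Nat.card {w : Fin n × Fin 2 → ZMod 2 | syndrome H w = 0 ∧ psupp w ⊆ E} =
      2 ^ (2 * E.card + (erased H Eᶜ).rank - (H.rank + (erased H E).rank)) *
        Nat.card {w : Fin n × Fin 2 → ZMod 2 | w ∈ rowSpace H ∧ psupp w ⊆ E} := by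
  have hN := rank_erased_add_finrank_coveredNormalizer H E
  have hS := rank_erased_compl_add_finrank_coveredStabilizer H E
  have hSN := Submodule.finrank_mono (coveredStabilizer_le_coveredNormalizer H E hH)
  refine ⟨by omega, ?_⟩
  rw [← coe_coveredNormalizer, ← coe_coveredStabilizer, SetLike.coe_sort_coe,
    SetLike.coe_sort_coe, natCard_eq_two_pow_finrank, natCard_eq_two_pow_finrank, ← pow_add]
  congr 1
  omega
end

section
/- Let H be a stabilizer matrix on n qubits (n ≥ 1), let p ∈ [0,1], and let D be any decoder for the quantum erasure channel of probability p. Then the decoding error probability satisfies P_err ≥ (2np − rank(H) + E_p[rank(H_Ē) − rank(H_E)] − 1) / (2n). -/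
open Finset

/-! Fix an erasure set `E`. Two errors supported in `E` that the decoder corrects and that have
the same syndrome differ by a stabilizer supported in `E`. The syndromes of errors supported
in `E` lie in the column space of `H_E`, and the stabilizers supported in `E` are the kernel of
the restriction `S → S|_Ē`, of dimension `rank H - rank H_Ē`. So at most
`2 ^ (rank H_E + rank H - rank H_Ē)` of the `4 ^ |E|` errors are corrected, and the failure
rate given `E` is at least `1 - 2 ^ (-t)` with `t = 2|E| - rank H + rank H_Ē - rank H_E ≤ 2n`.
Since `1 - 2 ^ (-t) ≥ (t - 1) / (2n)`, averaging over `E` with `E_p |E| = np` gives the bound. -/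

open Matrix

section BinomialWeights

variable {α : Type*} [Fintype α] (p : ℝ)

theorem Fintype.sum_pow_mul_one_sub_pow :
    ∑ E : Finset α, p ^ #E * (1 - p) ^ (Fintype.card α - #E) = 1 := by
  rw [Fintype.sum_pow_mul_eq_add_pow, add_sub_cancel, one_pow]

theorem Fintype.sum_pow_mul_one_sub_pow_mul_card :
    ∑ E : Finset α, p ^ #E * (1 - p) ^ (Fintype.card α - #E) * #E = Fintype.card α * p := by
  classical
  have h := congrArg (Polynomial.eval p) (bernsteinPolynomial.sum_smul ℝ (Fintype.card α))
  rw [← powerset_univ,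
    sum_powerset_apply_card (fun m => p ^ m * (1 - p) ^ (Fintype.card α - m) * m)]
  simpa [Polynomial.eval_finsetSum, bernsteinPolynomial, card_univ, mul_comm, mul_left_comm,
    mul_assoc] using h

end BinomialWeights

theorem sub_one_div_le_one_sub_inv_two_pow {t m : ℕ} (hm : 0 < m) (ht : t ≤ m) :
    ((t : ℝ) - 1) / m ≤ 1 - (2 ^ t)⁻¹ := by
  have htwo : (t : ℝ) + 1 ≤ 2 ^ t := by exact_mod_cast Nat.lt_two_pow_self
  have hm' : (0 : ℝ) < m := by exact_mod_cast hm
  have ht' : (t : ℝ) ≤ m := by exact_mod_cast ht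
  -- `(m - t + 1) (t + 1) = m + 1 + t (m - t)`
  have key : (m : ℝ) ≤ (m - t + 1) * 2 ^ t := by nlinarith
  rw [div_le_iff₀ hm']
  field_simp
  nlinarith

theorem div_le_of_one_sub_two_pow_div_four_pow_le {k n a : ℕ} {x : ℝ} (hn : 0 < n)
    (hk : k ≤ n) (hx₀ : 0 ≤ x) (hx : 1 - 2 ^ a / 4 ^ k ≤ x) :
    (2 * k - a - 1 : ℝ) / (2 * n) ≤ x := by
  rcases le_or_gt (2 * k) a with hka | hka
  · refine le_trans (div_nonpos_of_nonpos_of_nonneg ?_ (by positivity)) hx₀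
    have : (2 * k : ℝ) ≤ a := by exact_mod_cast hka
    linarith
  · obtain ⟨t, ht⟩ : ∃ t, 2 * k = a + t := ⟨2 * k - a, by omega⟩
    have hfour : (4 : ℝ) ^ k = 2 ^ a * 2 ^ t := by
      rw [← pow_add, ← ht, pow_mul]
      norm_num
    calc (2 * k - a - 1 : ℝ) / (2 * n) = ((t : ℝ) - 1) / ((2 * n : ℕ) : ℝ) := by
          rw [show (2 * k : ℝ) = a + t by exact_mod_cast ht]
          push_cast
          ring
      _ ≤ 1 - (2 ^ t)⁻¹ := sub_one_div_le_one_sub_inv_two_pow (by omega) (by omega)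
      _ = 1 - 2 ^ a / 4 ^ k := by rw [hfour]; field_simp
      _ ≤ x := hx

theorem Finset.card_le_card_mul_card_image_of_sub_mem {G Y : Type*} [AddGroup G]
    [DecidableEq Y] (s T : Finset G) (f : G → Y)
    (h : ∀ x ∈ s, ∀ y ∈ s, f x = f y → x - y ∈ T) :
    #s ≤ #T * #(s.image f) := by
  refine card_le_mul_card_image s #T fun b hb => ?_
  obtain ⟨x₀, hx₀, rfl⟩ := mem_image.mp hb
  refine card_le_card_of_injOn (· - x₀) (fun x hx => ?_)
    fun x _ y _ hxy => sub_left_injective hxy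
  rw [mem_coe, mem_filter] at hx
  exact h x hx.1 x₀ hx₀ hx.2

theorem Submodule.finrank_inf_ker_add_finrank_map {K V W : Type*} [DivisionRing K]
    [AddCommGroup V] [Module K V] [AddCommGroup W] [Module K W] [FiniteDimensional K V]
    (S : Submodule K V) (f : V →ₗ[K] W) :
    Module.finrank K ↥(S ⊓ LinearMap.ker f) + Module.finrank K ↥(S.map f) =
      Module.finrank K S := by
  have h := (f.domRestrict S).finrank_range_add_finrank_ker
  rw [LinearMap.range_domRestrict, LinearMap.ker_domRestrict, ← Submodule.finrank_map_subtype_eq,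
    Submodule.map_comap_subtype] at h
  omega

theorem Submodule.card_toFinset {K V : Type*} [Field K] [AddCommGroup V] [Module K V]
    [Fintype V] (W : Submodule K V) [DecidablePred (· ∈ W)] :
    #(W : Set V).toFinset = Nat.card K ^ Module.finrank K W := by
  rw [← Nat.card_eq_card_toFinset, ← Module.natCard_eq_pow_finrank]
  rfl

section Qubits

variable {n : ℕ}

def restrictQubits (E : Finset (Fin n)) :
    (Fin n × Fin 2 → ZMod 2) →ₗ[ZMod 2] (Fin n × Fin 2 → ZMod 2) :=
  LinearMap.pi fun q => if q.1 ∈ E then LinearMap.proj q else 0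

@[simp]
theorem restrictQubits_apply (E : Finset (Fin n)) (w : Fin n × Fin 2 → ZMod 2)
    (q : Fin n × Fin 2) : restrictQubits E w q = if q.1 ∈ E then w q else 0 := by
  by_cases h : q.1 ∈ E <;> simp [restrictQubits, h]

theorem psupp_subset_iff {w : Fin n × Fin 2 → ZMod 2} {E : Finset (Fin n)} :
    psupp w ⊆ E ↔ ∀ q : Fin n × Fin 2, q.1 ∉ E → w q = 0 := by
  simp only [psupp, subset_iff, mem_filter, mem_univ, true_and]
  refine ⟨fun h q hq => ?_, fun h i hi => by_contra fun hiE => hi ⟨h _ hiE, h _ hiE⟩⟩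
  have hq := not_not.mp (mt (@h q.1) hq)
  obtain ⟨i, j⟩ := q
  fin_cases j
  exacts [hq.1, hq.2]

theorem restrictQubits_compl_eq_zero_iff {w : Fin n × Fin 2 → ZMod 2} {E : Finset (Fin n)} :
    restrictQubits Eᶜ w = 0 ↔ psupp w ⊆ E := by
  simp [psupp_subset_iff, funext_iff]

theorem card_psupp_subset (E : Finset (Fin n)) :
    #{w : Fin n × Fin 2 → ZMod 2 | psupp w ⊆ E} = 4 ^ #E := by
  have hpi : ({w : Fin n × Fin 2 → ZMod 2 | psupp w ⊆ E} : Finset _) =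
      Fintype.piFinset fun q => if q.1 ∈ E then univ else {0} := by
    ext w
    simp only [mem_filter, mem_univ, true_and, Fintype.mem_piFinset, psupp_subset_iff]
    refine forall_congr' fun q => ?_
    split_ifs with h <;> simp [h]
  rw [hpi, Fintype.card_piFinset, Fintype.prod_prod_type]
  calc ∏ i, ∏ j : Fin 2, #(if (i, j).1 ∈ E then univ else {0} : Finset (ZMod 2))
      = ∏ i, if i ∈ E then 4 else 1 := by
        refine prod_congr rfl fun i _ => ?_
        split_ifs <;> simp
    _ = 4 ^ #E := by rw [Fintype.prod_ite_mem, prod_const]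

end Qubits

section Decoding

variable {ρ : Type*} {n : ℕ} (H : Matrix ρ (Fin n × Fin 2) (ZMod 2))

theorem erased_row (E : Finset (Fin n)) (a : ρ) : erased H E a = restrictQubits E (H a) := by
  ext q
  simp [erased]

theorem rowSpace_erased (E : Finset (Fin n)) :
    rowSpace (erased H E) = (rowSpace H).map (restrictQubits E) := by
  rw [rowSpace, rowSpace, Submodule.map_span, ← Set.range_comp]
  simp_rw [erased_row]
  rfl

theorem syndrome_eq_mulVec (w : Fin n × Fin 2 → ZMod 2) :
    syndrome H w = H *ᵥ fun q => w (q.1, q.2 + 1) := by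
  ext a
  simp [syndrome, sympl, mulVec, dotProduct, Fintype.sum_prod_type, Fin.sum_univ_two]

theorem syndrome_erased {E : Finset (Fin n)} {w : Fin n × Fin 2 → ZMod 2} (hw : psupp w ⊆ E) :
    syndrome (erased H E) w = syndrome H w := by
  rw [psupp_subset_iff] at hw
  ext a
  simp only [syndrome, sympl]
  refine sum_congr rfl fun i _ => ?_
  by_cases h : i ∈ E
  · simp [erased, h]
  · simp [hw (i, 0) h, hw (i, 1) h]

theorem rank_eq_finrank_rowSpace [Fintype ρ] : H.rank = Module.finrank (ZMod 2) (rowSpace H) :=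
  H.rank_eq_finrank_span_row

theorem finrank_rowSpace_inf_ker_add_rank_erased_compl [Fintype ρ] (E : Finset (Fin n)) :
    Module.finrank (ZMod 2) ↥(rowSpace H ⊓ LinearMap.ker (restrictQubits Eᶜ)) +
      (erased H Eᶜ).rank = H.rank := by
  rw [rank_eq_finrank_rowSpace, rank_eq_finrank_rowSpace, rowSpace_erased]
  exact Submodule.finrank_inf_ker_add_finrank_map _ _

variable (D : Finset (Fin n) → (ρ → ZMod 2) → ((Fin n × Fin 2 → ZMod 2) ⧸ rowSpace H))
  (E : Finset (Fin n))

def correctlyDecoded : Set (Fin n × Fin 2 → ZMod 2) :=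
  {w | psupp w ⊆ E ∧ D E (syndrome H w) = Submodule.Quotient.mk w}

def decodingFailures : Set (Fin n × Fin 2 → ZMod 2) :=
  {w | psupp w ⊆ E ∧ D E (syndrome H w) ≠ Submodule.Quotient.mk w}

theorem natCard_correctlyDecoded_le [Fintype ρ] :
    Nat.card (correctlyDecoded H D E) ≤
      2 ^ Module.finrank (ZMod 2) ↥(rowSpace H ⊓ LinearMap.ker (restrictQubits Eᶜ)) *
        2 ^ (erased H E).rank := by
  classical
  have hdiff : ∀ x ∈ (correctlyDecoded H D E).toFinset,
      ∀ y ∈ (correctlyDecoded H D E).toFinset,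
      syndrome H x = syndrome H y →
        x - y ∈ ((rowSpace H ⊓ LinearMap.ker (restrictQubits Eᶜ) : Submodule _ _) :
          Set _).toFinset := by
    intro x hx y hy hxy
    rw [Set.mem_toFinset] at hx hy
    rw [Set.mem_toFinset, SetLike.mem_coe, Submodule.mem_inf, LinearMap.mem_ker, map_sub,
      restrictQubits_compl_eq_zero_iff.mpr hx.1, restrictQubits_compl_eq_zero_iff.mpr hy.1,
      sub_zero, ← Submodule.Quotient.eq, ← hx.2, ← hy.2, hxy]
    exact ⟨rfl, rfl⟩
  have hsyndromes : (correctlyDecoded H D E).toFinset.image (syndrome H) ⊆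
      (LinearMap.range (erased H E).mulVecLin : Set _).toFinset := by
    intro s hs
    obtain ⟨w, hw, rfl⟩ := mem_image.mp hs
    rw [Set.mem_toFinset] at hw
    rw [Set.mem_toFinset, SetLike.mem_coe, ← syndrome_erased H hw.1, syndrome_eq_mulVec]
    exact LinearMap.mem_range_self _ _
  rw [Nat.card_eq_card_toFinset]
  refine (card_le_card_mul_card_image_of_sub_mem _ _ _ hdiff).trans ?_
  rw [Submodule.card_toFinset, Nat.card_zmod]
  refine Nat.mul_le_mul_left _ ((card_le_card hsyndromes).trans_eq ?_)
  rw [Submodule.card_toFinset, Nat.card_zmod, Matrix.rank]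

theorem natCard_decodingFailures_add_natCard_correctlyDecoded :
    Nat.card (decodingFailures H D E) + Nat.card (correctlyDecoded H D E) = 4 ^ #E := by
  classical
  simp only [decodingFailures, correctlyDecoded, Nat.card_eq_card_toFinset, Set.toFinset_ofPred,
    ← filter_filter]
  rw [add_comm, card_filter_add_card_filter_not, card_psupp_subset]

theorem div_le_decodingFailures_div [Fintype ρ] (hn : 0 < n) :
    ((2 * #E : ℝ) - H.rank + ((erased H Eᶜ).rank - (erased H E).rank) - 1) / (2 * n) ≤
      (Nat.card (decodingFailures H D E) : ℝ) / 4 ^ #E := by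
  have hrank := finrank_rowSpace_inf_ker_add_rank_erased_compl H E
  have hcorrect := natCard_correctlyDecoded_le H D E
  have hsplit := natCard_decodingFailures_add_natCard_correctlyDecoded H D E
  generalize Module.finrank (ZMod 2) ↥(rowSpace H ⊓ LinearMap.ker (restrictQubits Eᶜ)) = d
    at hrank hcorrect
  generalize Nat.card (decodingFailures H D E) = failures at hsplit ⊢
  have hE : #E ≤ n := (card_le_univ E).trans_eq (Fintype.card_fin n)
  have hrate : 1 - 2 ^ (d + (erased H E).rank) / 4 ^ #E ≤ (failures : ℝ) / 4 ^ #E := by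
    rw [le_div_iff₀ (by positivity), sub_mul, div_mul_cancel₀ _ (by positivity), one_mul,
      pow_add]
    have hcorrect' : (Nat.card (correctlyDecoded H D E) : ℝ) ≤ 2 ^ d * 2 ^ (erased H E).rank :=
      mod_cast hcorrect
    have hsplit' : (failures : ℝ) + Nat.card (correctlyDecoded H D E) = 4 ^ #E :=
      mod_cast hsplit
    linarith
  convert div_le_of_one_sub_two_pow_div_four_pow_le hn hE (by positivity) hrate using 2
  rw [← hrank]
  push_cast
  ring

end Decoding

theorem fano_lower_bound_on_decoding_error_probability_general
    {r n : ℕ} (hn : 1 ≤ n) (H : Matrix (Fin r) (Fin n × Fin 2) (ZMod 2))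
    (p : ℝ) (hp : p ∈ Set.Icc (0 : ℝ) 1)
    (D : Finset (Fin n) → (Fin r → ZMod 2) → ((Fin n × Fin 2 → ZMod 2) ⧸ rowSpace H)) :
    (2 * n * p - (H.rank : ℝ) + rankDiffExp H p - 1) / (2 * n) ≤ errProb H p D := by
  have hweight : ∀ E : Finset (Fin n), 0 ≤ p ^ #E * (1 - p) ^ (n - #E) :=
    fun E => mul_nonneg (pow_nonneg hp.1 _) (pow_nonneg (sub_nonneg.mpr hp.2) _)
  have htotal : ∑ E : Finset (Fin n), p ^ #E * (1 - p) ^ (n - #E) = 1 := by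
    simpa using Fintype.sum_pow_mul_one_sub_pow (α := Fin n) p
  have hmean : ∑ E : Finset (Fin n), p ^ #E * (1 - p) ^ (n - #E) * #E = n * p := by
    simpa using Fintype.sum_pow_mul_one_sub_pow_mul_card (α := Fin n) p
  calc (2 * n * p - (H.rank : ℝ) + rankDiffExp H p - 1) / (2 * n)
      = ∑ E : Finset (Fin n), p ^ #E * (1 - p) ^ (n - #E) *
          (((2 * #E : ℝ) - H.rank + ((erased H Eᶜ).rank - (erased H E).rank) - 1) /
            (2 * n)) := by
        simp only [mul_div_assoc', ← sum_div, mul_sub, mul_add, sum_sub_distrib, sum_add_distrib,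
          ← sum_mul, mul_left_comm _ (2 : ℝ), ← mul_sum, hmean, htotal, rankDiffExp]
        ring
    _ ≤ errProb H p D :=
        sum_le_sum fun E _ =>
          mul_le_mul_of_nonneg_left (div_le_decodingFailures_div H D E hn) (hweight E)

theorem fano_lower_bound_on_decoding_error_probability
    {r n : ℕ} (hn : 1 ≤ n) (H : Matrix (Fin r) (Fin n × Fin 2) (ZMod 2))
    (hH : IsStabilizerMatrix H) (p : ℝ) (hp : p ∈ Set.Icc (0 : ℝ) 1)
    (D : Finset (Fin n) → (Fin r → ZMod 2) → ((Fin n × Fin 2 → ZMod 2) ⧸ rowSpace H)) :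
    (2 * n * p - (H.rank : ℝ) + rankDiffExp H p - 1) / (2 * n) ≤ errProb H p D :=
  fano_lower_bound_on_decoding_error_probability_general hn H p hp D
end

section
/- Let G be a finite simple m-regular graph whose girth is at least δ+2, and let p ∈ [0,1]. Let C be a connected subgraph of G given by a vertex set W and an edge set T ⊆ E(G) with every edge of T joining two vertices of W, such that (W,T) is connected, |T| = k with 0 ≤ k ≤ δ, and W is exactly the set of endpoints of the edges of T when k ≥ 1 (and W is a single vertex when k = 0). Then, under Bernoulli bond percolation with parameter p on G, the probability that (W,T) is a connected component of the open subgraph — i.e., every edge of T is open and every edge of G incident to a vertex of W other than the edges of T is closed — equals (1−p)^m · (p·(1−p)^(m−2))^k. -/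
/-!
The event only involves the edges touching `W`: those of `T` must be open and the remaining
ones, the set `B`, closed, so its probability is `p ^ k * (1 - p) ^ #B`. Every cycle of `G` is
longer than `k + 1`, so the connected subgraph `(W, T)` is a tree (hence `#W = k + 1`) and it is
induced (an extra edge of `G` inside `W` would close a path of `T` into a short cycle). Summing
degrees over `W` counts the edges of `T` twice and those of `B` once:
`m * (k + 1) = 2 * k + #B`. The girth bound also forces a cycle, hence `m ≥ 2`.
-/

open Finset

theorem Finset.sum_powerset_ite_subset_and_forall_notMem {α R : Type*} [DecidableEq α]
    [CommSemiring R] {E A B : Finset α} (hA : A ⊆ E) (hB : B ⊆ E) (hAB : Disjoint A B)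
    (p q : R) :
    ∑ F ∈ E.powerset, (if A ⊆ F ∧ ∀ e ∈ B, e ∉ F then p ^ #F * q ^ (#E - #F) else 0)
      = p ^ #A * q ^ #B * (p + q) ^ (#E - #A - #B) := by
  have hAEB : A ⊆ E \ B := subset_sdiff.2 ⟨hA, hAB⟩
  set D := (E \ B) \ A
  have hcardD : #D = #E - #A - #B := by
    rw [card_sdiff_of_subset hAEB, card_sdiff_of_subset hB]
    omega
  have hcardAB : #A + #B ≤ #E := by
    rw [← card_union_of_disjoint hAB]
    exact card_le_card (union_subset hA hB)
  have hfilter : {F ∈ E.powerset | A ⊆ F ∧ ∀ e ∈ B, e ∉ F} = Icc A (E \ B) := by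
    ext F
    simp only [mem_filter, mem_powerset, mem_Icc, subset_sdiff, disjoint_right]
    tauto
  have hinj : Set.InjOn (A ∪ ·) D.powerset := fun t ht t' ht' h => by
    rw [coe_powerset, Set.mem_preimage, Set.mem_powerset_iff, coe_subset] at ht ht'
    rw [← union_sdiff_cancel_left (disjoint_of_subset_right ht disjoint_sdiff),
      ← union_sdiff_cancel_left (disjoint_of_subset_right ht' disjoint_sdiff)]
    exact congrArg (· \ A) h
  have hterm : ∀ t ∈ D.powerset, p ^ #(A ∪ t) * q ^ (#E - #(A ∪ t))
      = p ^ #A * q ^ #B * (p ^ #t * q ^ (#D - #t)) := fun t ht => by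
    rw [mem_powerset] at ht
    have htD := card_le_card ht
    rw [card_union_of_disjoint (disjoint_of_subset_right ht disjoint_sdiff),
      show #E - (#A + #t) = #B + (#D - #t) by omega, pow_add, pow_add]
    ring
  rw [← sum_filter, hfilter, Icc_eq_image_powerset hAEB, sum_image hinj, sum_congr rfl hterm,
    ← mul_sum, sum_pow_mul_eq_add_pow, hcardD]

theorem Sym2.card_filter_mem_eq_ite_add_ite {V : Type*} [DecidableEq V] (W : Finset V)
    {e : Sym2 V} (he : ¬e.IsDiag) :
    #{v ∈ W | v ∈ e} = (if ∃ v ∈ W, v ∈ e then 1 else 0) + (if e ∈ W.sym2 then 1 else 0) := by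
  induction e using Sym2.ind with
  | _ a b =>
    have hab : a ≠ b := by simpa using he
    have hex : (∃ v ∈ W, v ∈ s(a, b)) ↔ a ∈ W ∨ b ∈ W := by
      simp only [Sym2.mem_iff]
      aesop
    rw [if_congr hex rfl rfl]
    by_cases ha : a ∈ W <;> by_cases hb : b ∈ W <;> simp [ha, hb, hab, filter_or, filter_eq']

namespace SimpleGraph

variable {V : Type*} {G : SimpleGraph V}

theorem sum_degree_eq_card_filter_exists_mem_add_card_inter_sym2 [DecidableEq V]
    [Fintype G.edgeSet] [∀ v, Fintype (G.neighborSet v)] (W : Finset V) :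
    ∑ v ∈ W, G.degree v
      = #{e ∈ G.edgeFinset | ∃ v ∈ W, v ∈ e} + #(G.edgeFinset ∩ W.sym2) := by
  simp_rw [← card_incidenceFinset_eq_degree, incidenceFinset_eq_filter, card_filter]
  rw [sum_comm, ← filter_mem_eq_inter, card_filter, ← sum_add_distrib]
  refine sum_congr rfl fun e he => ?_
  rw [← card_filter, Sym2.card_filter_mem_eq_ite_add_ite W
    (G.not_isDiag_of_mem_edgeSet (mem_edgeFinset.mp he))]

theorem Walk.IsCycle.two_le_degree {u : V} {c : G.Walk u u} (hc : c.IsCycle)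
    [Fintype (G.neighborSet u)] : 2 ≤ G.degree u := by
  classical
  rw [← card_neighborFinset_eq_degree, ← card_pair hc.snd_ne_penultimate]
  refine card_le_card fun v hv => ?_
  rw [mem_insert, mem_singleton] at hv
  rw [mem_neighborFinset]
  rcases hv with rfl | rfl
  exacts [c.adj_snd hc.not_nil, (c.adj_penultimate hc.not_nil).symm]

theorem IsRegularOfDegree.two_le_of_not_isAcyclic [G.LocallyFinite] {m : ℕ}
    (hreg : G.IsRegularOfDegree m) (h : ¬G.IsAcyclic) : 2 ≤ m := by
  simp only [IsAcyclic, not_forall, not_not] at h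
  obtain ⟨u, c, hc⟩ := h
  exact hreg u ▸ hc.two_le_degree

theorem Walk.IsTrail.length_le_card {u v : V} {w : G.Walk u v} (hw : w.IsTrail)
    {S : Finset (Sym2 V)} (hS : ∀ e ∈ w.edges, e ∈ S) : w.length ≤ #S := by
  classical
  rw [← length_edges, ← List.toFinset_card_of_nodup hw.edges_nodup]
  exact card_le_card fun e he => hS e (List.mem_toFinset.mp he)

namespace Subgraph

variable {C : G.Subgraph}

theorem mem_edgeSet_of_mem_edges_map_hom {x y : C.verts} (w : C.coe.Walk x y) {e : Sym2 V}
    (he : e ∈ (w.map C.hom).edges) : e ∈ C.edgeSet := by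
  rw [Walk.edges_map, List.mem_map] at he
  obtain ⟨e', he', rfl⟩ := he
  simpa using w.edges_subset_edgeSet he'

theorem coe_isAcyclic_of_card_lt_egirth {T : Finset (Sym2 V)} (hT : C.edgeSet = ↑T)
    (hg : (#T : ℕ∞) < G.egirth) : C.coe.IsAcyclic := by
  intro x c hc
  have hc' : (c.map C.hom).IsCycle := hc.map hom_injective
  have hlen : (c.map C.hom).length ≤ #T := hc'.isTrail.length_le_card fun e he => by
    simpa [hT] using mem_edgeSet_of_mem_edges_map_hom c he
  exact (le_egirth.mp le_rfl _ _ hc').not_gt (hg.trans_le' (by exact_mod_cast hlen))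

/-- A path inside `C` closed up by an edge of `G` outside `C` would be a cycle of length at most
`#T + 1`. -/
theorem Connected.adj_of_card_add_one_lt_egirth (hC : C.Connected) {T : Finset (Sym2 V)}
    (hT : C.edgeSet = ↑T) (hg : (#T + 1 : ℕ∞) < G.egirth) {u v : V} (hu : u ∈ C.verts)
    (hv : v ∈ C.verts) (huv : G.Adj u v) : C.Adj u v := by
  classical
  by_contra hnot
  obtain ⟨w⟩ := hC.preconnected ⟨v, hv⟩ ⟨u, hu⟩
  obtain ⟨p, hp, hpT⟩ : ∃ p : G.Walk v u, p.IsPath ∧ ∀ e ∈ p.edges, e ∈ T :=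
    ⟨_, Walk.bypass_isPath _, fun e he => by
      simpa [hT] using mem_edgeSet_of_mem_edges_map_hom w (Walk.edges_bypass_subset_edges _ he)⟩
  have hc : (Walk.cons huv p).IsCycle := (Walk.cons_isCycle_iff _ huv).mpr
    ⟨hp, fun h => hnot (by rw [← Subgraph.mem_edgeSet, hT]; exact hpT _ h)⟩
  have hlen : (Walk.cons huv p).length ≤ #T + 1 := by
    simpa using hp.isTrail.length_le_card hpT
  exact (le_egirth.mp le_rfl _ _ hc).not_gt (hg.trans_le' (by exact_mod_cast hlen))

theorem ncard_verts_eq_ncard_edgeSet_add_one [Finite C.verts] (hC : C.coe.IsTree) :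
    C.verts.ncard = C.edgeSet.ncard + 1 := by
  have := (isTree_iff_connected_and_card.mp hC).2
  rw [← image_coe_edgeSet_coe,
    Set.ncard_image_of_injective _ (Sym2.map.injective Subtype.val_injective)]
  simpa [Nat.card_coe_set_eq] using this.symm

variable {W : Finset V} {T : Finset (Sym2 V)}

theorem Connected.card_eq_card_add_one (hC : C.Connected) (hW : C.verts = ↑W)
    (hT : C.edgeSet = ↑T) (hg : (#T : ℕ∞) < G.egirth) : #W = #T + 1 := by
  have : Finite C.verts := by rw [hW]; infer_instance
  have htree : C.coe.IsTree := ⟨hC.coe, coe_isAcyclic_of_card_lt_egirth hT hg⟩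
  simpa [hW, hT] using ncard_verts_eq_ncard_edgeSet_add_one htree

theorem Connected.edgeFinset_inter_sym2_eq [DecidableEq V] [Fintype G.edgeSet]
    (hC : C.Connected) (hW : C.verts = ↑W) (hT : C.edgeSet = ↑T)
    (hg : (#T + 1 : ℕ∞) < G.egirth) : G.edgeFinset ∩ W.sym2 = T := by
  ext e
  induction e using Sym2.ind with
  | _ u v =>
    rw [mem_inter, mem_edgeFinset, mem_edgeSet, mk_mem_sym2_iff, ← mem_coe (s := T), ← hT,
      Subgraph.mem_edgeSet, ← mem_coe (s := W), ← mem_coe (s := W), ← hW]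
    exact ⟨fun ⟨huv, hu, hv⟩ => hC.adj_of_card_add_one_lt_egirth hT hg hu hv huv,
      fun h => ⟨h.adj_sub, h.fst_mem, h.snd_mem⟩⟩

theorem Connected.card_filter_exists_mem_sdiff_eq [DecidableEq V] [Fintype G.edgeSet]
    [G.LocallyFinite] {m : ℕ} (hreg : G.IsRegularOfDegree m) (hm : 2 ≤ m) (hC : C.Connected)
    (hW : C.verts = ↑W) (hT : C.edgeSet = ↑T) (hg : (#T + 1 : ℕ∞) < G.egirth) :
    #({e ∈ G.edgeFinset | ∃ v ∈ W, v ∈ e} \ T) = m + #T * (m - 2) := by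
  have hinduced := hC.edgeFinset_inter_sym2_eq hW hT hg
  have hdeg := sum_degree_eq_card_filter_exists_mem_add_card_inter_sym2 (G := G) W
  rw [sum_const_nat fun v _ => hreg v, hinduced,
    hC.card_eq_card_add_one hW hT (lt_of_le_of_lt le_self_add hg)] at hdeg
  have hTsub : T ⊆ {e ∈ G.edgeFinset | ∃ v ∈ W, v ∈ e} := fun e he => by
    rw [← hinduced, mem_inter, mem_sym2_iff] at he
    exact mem_filter.mpr ⟨he.1, _, he.2 _ (Sym2.out_fst_mem e), Sym2.out_fst_mem e⟩
  rw [card_sdiff_of_subset hTsub]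
  obtain ⟨a, rfl⟩ := Nat.exists_eq_add_of_le' hm
  rw [Nat.add_sub_cancel]
  ring_nf at hdeg ⊢
  omega

end Subgraph

end SimpleGraph

theorem probability_connected_component_in_percolation_general
    {V : Type*} [Fintype V] [DecidableEq V]
    (G : SimpleGraph V) [DecidableRel G.Adj]
    (m δ k : ℕ) (hreg : G.IsRegularOfDegree m)
    (hgirth : (δ + 2 : ℕ∞) ≤ G.girth)
    (p : ℝ)
    (W : Finset V) (T : Finset (Sym2 V)) (C : G.Subgraph)
    (hverts : C.verts = ↑W) (hedges : C.edgeSet = ↑T)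
    (hconn : C.Connected) (hTcard : T.card = k) (hkδ : k ≤ δ) :
    ∑ F ∈ G.edgeFinset.powerset,
      (if T ⊆ F ∧ ∀ e ∈ G.edgeFinset, (∃ v ∈ W, v ∈ e) → e ∉ T → e ∉ F
        then p ^ F.card * (1 - p) ^ (G.edgeFinset.card - F.card) else 0)
      = (1 - p) ^ m * (p * (1 - p) ^ (m - 2)) ^ k := by
  have hg : (#T + 1 : ℕ∞) < G.egirth :=
    lt_of_lt_of_le (by rw [hTcard]; exact_mod_cast (by omega : k + 1 < δ + 2))
      (hgirth.trans (ENat.natCast_toNat_le_self _))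
  have hm : 2 ≤ m :=
    hreg.two_le_of_not_isAcyclic fun h => by simp [SimpleGraph.girth_eq_zero.mpr h] at hgirth
  have hTE : T ⊆ G.edgeFinset := fun e he =>
    SimpleGraph.mem_edgeFinset.mpr (C.edgeSet_subset (by rw [hedges]; exact he))
  set B := {e ∈ G.edgeFinset | ∃ v ∈ W, v ∈ e} \ T
  have hBcard : #B = m + k * (m - 2) :=
    hTcard ▸ hconn.card_filter_exists_mem_sdiff_eq hreg hm hverts hedges hg
  have hBE : B ⊆ G.edgeFinset := sdiff_subset.trans (filter_subset _ _)
  calc _ = p ^ #T * (1 - p) ^ #B * (p + (1 - p)) ^ (#G.edgeFinset - #T - #B) := by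
        convert sum_powerset_ite_subset_and_forall_notMem hTE hBE disjoint_sdiff p (1 - p)
          using 3 with F
        simp [B, and_imp]
    _ = _ := by
        rw [add_sub_cancel, one_pow, mul_one, hTcard, hBcard, pow_add, pow_mul, mul_pow]
        ring

theorem probability_connected_component_in_percolation
    {V : Type*} [Fintype V] [DecidableEq V]
    (G : SimpleGraph V) [DecidableRel G.Adj]
    (m δ k : ℕ) (hreg : G.IsRegularOfDegree m)
    (hgirth : (δ + 2 : ℕ∞) ≤ G.girth)
    (p : ℝ) (hp : p ∈ Set.Icc (0 : ℝ) 1)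
    (W : Finset V) (T : Finset (Sym2 V)) (C : G.Subgraph)
    (hverts : C.verts = ↑W) (hedges : C.edgeSet = ↑T)
    (hconn : C.Connected) (hTcard : T.card = k) (hkδ : k ≤ δ)
    (hk0 : k = 0 → W.card = 1)
    (hk1 : 1 ≤ k → ∀ v ∈ W, ∃ e ∈ T, v ∈ e) :
    ∑ F ∈ G.edgeFinset.powerset,
      (if T ⊆ F ∧ ∀ e ∈ G.edgeFinset, (∃ v ∈ W, v ∈ e) → e ∉ T → e ∉ F
        then p ^ F.card * (1 - p) ^ (G.edgeFinset.card - F.card) else 0)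
      = (1 - p) ^ m * (p * (1 - p) ^ (m - 2)) ^ k :=
  probability_connected_component_in_percolation_general G m δ k hreg hgirth p W T C hverts hedges
    hconn hTcard hkδ
end

section
/- Let m ≥ 3 and let G be a finite simple m-regular graph with vertex set V whose girth is at least δ+2. Then for every k with 1 ≤ k ≤ δ, the number of edge subsets T ⊆ E(G) with |T| = k such that the subgraph formed by T and its endpoints is connected is at least (|V|/(k+1))·a_k, where a_k = (m/k)·C((m−1)(k+1), k−1). -/
/-!
Fix a root `v`. Connected edge sets through `v` are grown one edge at a time from a set of
exits, directed edges `(x, y)` leaving the current vertex set: an exit is either discarded or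
used, and using `(a, b)` adds the edge `ab` and opens the `m - 1` exits at `b` that do not lead
back to `a`. As the girth exceeds `k + 1`, new exits lead to fresh, pairwise distinct vertices,
and different choices produce different edge sets. So at least `raney (m - 1) m k` connected
`k`-edge sets contain `v`, where `raney p d j` obeys the recursion of this growth process; it
equals `d / (d + p j) * C(d + p j, j)`, which is `a_k` for `d = m`, `p = m - 1`. A connected
`k`-edge set has at most `k + 1` vertices, so double counting the pairs (vertex, connected
`k`-edge set containing it) shows that there are at least `|V| a_k / (k + 1)` such sets.
-/

open Finset

/-- The Raney numbers: `raney p d j` counts the ways to grow `j` edges from `d` available slots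
when each used slot opens `p` new ones. -/
def Nat.raney (p : ℕ) : ℕ → ℕ → ℕ
  | _, 0 => 1
  | 0, _ + 1 => 0
  | d + 1, j + 1 => Nat.raney p d (j + 1) + Nat.raney p (d + p) j
termination_by d j => (j, d)

namespace Nat

@[simp] lemma raney_zero_right (p d : ℕ) : raney p d 0 = 1 := by
  cases d <;> rw [raney]

@[simp] lemma raney_zero_succ (p j : ℕ) : raney p 0 (j + 1) = 0 := by
  rw [raney]

lemma raney_succ_succ (p d j : ℕ) :
    raney p (d + 1) (j + 1) = raney p d (j + 1) + raney p (d + p) j := by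
  rw [raney]

theorem add_mul_mul_raney {p : ℕ} (hp : 0 < p) (j d : ℕ) :
    (d + p * j) * raney p d j = d * (d + p * j).choose j := by
  induction j generalizing d with
  | zero => simp
  | succ j ih =>
    induction d with
    | zero => simp
    | succ d ihd =>
      set M := d + p + p * j with hM
      have hd : M * raney p d (j + 1) = d * M.choose (j + 1) := by
        rwa [show d + p * (j + 1) = M by ring] at ihd
      have hdp : M * raney p (d + p) j = (d + p) * M.choose j := by
        rw [hM, ih]
      have hjM : j ≤ M := by nlinarith
      have hchoose := choose_succ_right_eq M j
      have hpascal := choose_succ_succ M j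
      rw [show d + 1 + p * (j + 1) = M + 1 by ring, raney_succ_succ]
      refine Nat.eq_of_mul_eq_mul_left (show 0 < M by positivity) ?_
      zify [hjM] at hd hdp hchoose hpascal ⊢
      have hMz : (M : ℤ) = d + p + p * j := by rw [hM]; push_cast; ring
      linear_combination (M + 1 : ℤ) * (hd + hdp) - (M * (d + 1) : ℤ) * hpascal
        - (p : ℤ) * hchoose - ((M.choose j : ℤ) + M.choose (j + 1)) * hMz

theorem mul_raney_eq {m k : ℕ} (hm : 2 ≤ m) (hk : 1 ≤ k) :
    k * raney (m - 1) m k = m * ((m - 1) * (k + 1)).choose (k - 1) := by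
  obtain ⟨p, rfl⟩ : ∃ p, m = p + 2 := ⟨m - 2, by omega⟩
  obtain ⟨j, rfl⟩ : ∃ j, k = j + 1 := ⟨k - 1, by omega⟩
  simp only [Nat.add_sub_cancel]
  set M := (p + 1) * (j + 2)
  have hraney := add_mul_mul_raney (Nat.succ_pos p) (j + 1) (p + 2)
  have hchoose := add_one_mul_choose_eq M j
  rw [show p + 2 + (p + 1) * (j + 1) = M + 1 by ring] at hraney
  refine Nat.eq_of_mul_eq_mul_left (Nat.succ_pos M) ?_
  calc (M + 1) * ((j + 1) * raney (p + 1) (p + 2) (j + 1))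
      = (j + 1) * ((p + 2) * (M + 1).choose (j + 1)) := by rw [← hraney]; ring
    _ = (p + 2) * ((M + 1) * M.choose j) := by rw [hchoose]; ring
    _ = (M + 1) * ((p + 2) * M.choose j) := by ring

end Nat

namespace SimpleGraph

variable {V : Type*} {G : SimpleGraph V} {u v x y z a b c : V} {S T : Finset (Sym2 V)}
  {F F' : Finset (V × V)}

lemma girth_le_length_add_length {p q : G.Walk u v} (hp : p.IsPath) (hq : q.IsPath)
    (hpq : p ≠ q) : G.girth ≤ p.length + q.length := by
  obtain ⟨_, -, -, c, hc, hlen⟩ := hp.exists_isCycle_length_le_add_of_ne hq hpq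
  exact (G.girth_le_length hc).trans hlen

lemma Walk.IsTrail.length_le_card_s10 {p : G.Walk u v} (hp : p.IsTrail) (hS : ∀ e ∈ p.edges, e ∈ S) :
    p.length ≤ #S := by
  classical
  rw [← p.length_edges, ← List.toFinset_card_of_nodup hp.edges_nodup]
  exact card_le_card fun e he => hS e (List.mem_toFinset.mp he)

lemma Subgraph.Connected.ncard_verts_le_ncard_edgeSet_add_one {C : G.Subgraph}
    (hC : C.Connected) : C.verts.ncard ≤ C.edgeSet.ncard + 1 := by
  have := (Subgraph.connected_iff'.mp hC).card_vert_le_card_edgeSet_add_one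
  rwa [← C.image_coe_edgeSet_coe,
    Set.ncard_image_of_injective _ (Sym2.map.injective Subtype.val_injective)]

variable (G) in
def connectedEdgeSets (k : ℕ) : Set (Finset (Sym2 V)) :=
  {T | ↑T ⊆ G.edgeSet ∧ T.card = k ∧ ∃ C : G.Subgraph, C.verts = {v : V | ∃ e ∈ T, v ∈ e} ∧
    C.edgeSet = ↑T ∧ C.Connected}

lemma ncard_incident_le_of_mem_connectedEdgeSets {k : ℕ} (hT : T ∈ G.connectedEdgeSets k) :
    {x | ∃ e ∈ T, x ∈ e}.ncard ≤ k + 1 := by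
  obtain ⟨-, rfl, C, hCv, hCe, hC⟩ := hT
  simpa [hCv, hCe] using hC.ncard_verts_le_ncard_edgeSet_add_one

/-- The root `v` is included so that the growth can start from the connected subgraph `{v}`. -/
def rootedVerts (v : V) (S : Finset (Sym2 V)) : Set V := {x | x = v ∨ ∃ e ∈ S, x ∈ e}

variable (G) in
def rootedSubgraph (v : V) (S : Finset (Sym2 V)) : G.Subgraph where
  verts := rootedVerts v S
  Adj x y := s(x, y) ∈ S ∧ G.Adj x y
  adj_sub h := h.2
  edge_vert h := Or.inr ⟨_, h.1, Sym2.mem_mk_left _ _⟩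
  symm := ⟨fun _ _ h => ⟨Sym2.eq_swap ▸ h.1, h.2.symm⟩⟩

@[simp] lemma rootedSubgraph_verts : (G.rootedSubgraph v S).verts = rootedVerts v S := rfl

@[simp] lemma rootedSubgraph_adj : (G.rootedSubgraph v S).Adj x y ↔ s(x, y) ∈ S ∧ G.Adj x y :=
  Iff.rfl

lemma mem_rootedVerts_of_mem {e : Sym2 V} (he : e ∈ S) (hx : x ∈ e) : x ∈ rootedVerts v S :=
  Or.inr ⟨e, he, hx⟩

@[simp] lemma rootedVerts_empty (v : V) : rootedVerts v (∅ : Finset (Sym2 V)) = {v} := by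
  simp [rootedVerts]

lemma rootedVerts_insert [DecidableEq V] (v : V) (S : Finset (Sym2 V)) (e : Sym2 V) :
    rootedVerts v (insert e S) = rootedVerts v S ∪ {x | x ∈ e} := by
  ext x
  simp only [rootedVerts, Finset.mem_insert, Set.mem_union, Set.mem_ofPred_eq]
  grind

lemma rootedVerts_of_mem (hv : ∃ e ∈ S, v ∈ e) : rootedVerts v S = {x | ∃ e ∈ S, x ∈ e} := by
  ext x
  simp only [rootedVerts, Set.mem_ofPred_eq, or_iff_right_iff_imp]
  rintro rfl
  exact hv

lemma edgeSet_rootedSubgraph (hS : ↑S ⊆ G.edgeSet) : (G.rootedSubgraph v S).edgeSet = S := by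
  ext e
  induction e with
  | _ x y => exact ⟨fun h => h.1, fun h => ⟨h, hS h⟩⟩

lemma rootedSubgraph_empty (v : V) : G.rootedSubgraph v ∅ = G.singletonSubgraph v := by
  ext <;> simp [rootedSubgraph]

lemma rootedSubgraph_insert [DecidableEq V] (v : V) (S : Finset (Sym2 V)) (hab : G.Adj a b) :
    G.rootedSubgraph v (insert s(a, b) S) = G.rootedSubgraph v S ⊔ G.subgraphOfAdj hab := by
  ext x y
  · simp only [rootedSubgraph_verts, rootedVerts_insert, Subgraph.verts_sup, subgraphOfAdj_verts]
    grind
  · simp only [rootedSubgraph_adj, Finset.mem_insert, Subgraph.sup_adj, subgraphOfAdj_adj]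
    constructor
    · rintro ⟨h | h, hxy⟩
      · exact Or.inr h.symm
      · exact Or.inl ⟨h, hxy⟩
    · rintro (h | h)
      · exact ⟨Or.inr h.1, h.2⟩
      · exact ⟨Or.inl h.symm, by rw [← G.mem_edgeSet, ← h]; exact hab⟩

lemma connected_rootedSubgraph_empty (v : V) : (G.rootedSubgraph v ∅).Connected :=
  rootedSubgraph_empty v ▸ Subgraph.singletonSubgraph_connected

lemma Subgraph.Connected.rootedSubgraph_insert [DecidableEq V]
    (h : (G.rootedSubgraph v S).Connected) (hab : G.Adj a b) (ha : a ∈ rootedVerts v S) :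
    (G.rootedSubgraph v (insert s(a, b) S)).Connected := by
  rw [SimpleGraph.rootedSubgraph_insert v S hab]
  exact Subgraph.connected_sup h.preconnected (subgraphOfAdj_connected hab).preconnected
    ⟨a, ha, by simp⟩

lemma exists_mem_of_connected_rootedSubgraph (hS : S.Nonempty)
    (h : (G.rootedSubgraph v S).Connected) : ∃ e ∈ S, v ∈ e := by
  obtain ⟨e, he⟩ := hS
  by_cases hv : v ∈ e
  · exact ⟨e, he, hv⟩
  have : Nontrivial (G.rootedSubgraph v S).verts := Set.nontrivial_coe_sort.mpr
    ⟨_, mem_rootedVerts_of_mem he e.out_fst_mem, v, Or.inl rfl, fun h => hv (h ▸ e.out_fst_mem)⟩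
  obtain ⟨u, hu⟩ := h.preconnected.exists_adj_of_nontrivial ⟨v, Or.inl rfl⟩
  exact ⟨_, hu.1, Sym2.mem_mk_left _ _⟩

lemma exists_isPath_of_connected_rootedSubgraph (h : (G.rootedSubgraph v S).Connected)
    (hx : x ∈ rootedVerts v S) (hy : y ∈ rootedVerts v S) :
    ∃ p : G.Walk x y, p.IsPath ∧ p.length ≤ #S ∧ ∀ z ∈ p.support, z ∈ rootedVerts v S := by
  classical
  obtain ⟨p, hp⟩ :=
    (Subgraph.preconnected_iff_forall_exists_walk_subgraph _).mp h.preconnected hx hy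
  have hle : p.bypass.toSubgraph ≤ G.rootedSubgraph v S :=
    p.toSubgraph_bypass_le_toSubgraph.trans hp
  refine ⟨p.bypass, p.bypass_isPath, p.bypass_isPath.isTrail.length_le_card_s10 fun e he => ?_,
    fun z hz => hle.1 (p.bypass.mem_verts_toSubgraph.mpr hz)⟩
  have he' := Subgraph.edgeSet_mono hle (p.bypass.mem_edges_toSubgraph.mpr he)
  induction e with
  | _ x y => exact he'.1

lemma girth_le_card_add_length (h : (G.rootedSubgraph v S).Connected)
    (hx : x ∈ rootedVerts v S) (hy : y ∈ rootedVerts v S) {q : G.Walk x y} (hq : q.IsPath)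
    (hz : z ∈ q.support) (hzS : z ∉ rootedVerts v S) : G.girth ≤ #S + q.length := by
  obtain ⟨p, hp, hlen, hsupp⟩ := exists_isPath_of_connected_rootedSubgraph h hx hy
  have hpq : p ≠ q := by
    rintro rfl
    exact hzS (hsupp z hz)
  have := girth_le_length_add_length hp hq hpq
  omega

lemma eq_of_adj_of_adj_of_notMem_rootedVerts (h : (G.rootedSubgraph v S).Connected)
    (hgirth : #S + 2 < G.girth) (hx : x ∈ rootedVerts v S) (hy : y ∈ rootedVerts v S)
    (hb : b ∉ rootedVerts v S) (hxb : G.Adj x b) (hyb : G.Adj y b) : x = y := by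
  by_contra hxy
  have hq : (Walk.cons hxb (.cons hyb.symm .nil)).IsPath := by
    simp [hxy, hxb.ne, hyb.ne.symm]
  have := girth_le_card_add_length h hx hy hq (z := b) (by simp) hb
  simp only [Walk.length_cons, Walk.length_nil] at this
  omega

lemma not_adj_of_adj_of_adj_of_notMem_rootedVerts (h : (G.rootedSubgraph v S).Connected)
    (hgirth : #S + 3 < G.girth) (ha : a ∈ rootedVerts v S) (hb : b ∉ rootedVerts v S)
    (hc : c ∉ rootedVerts v S) (hx : x ∈ rootedVerts v S) (hab : G.Adj a b) (hbc : G.Adj b c) :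
    ¬G.Adj c x := by
  intro hcx
  have hac : a ≠ c := fun hac => hc (hac ▸ ha)
  have hbx : b ≠ x := fun hbx => hb (hbx ▸ hx)
  obtain rfl | hax := eq_or_ne a x
  · have := girth_le_length_add_length (p := .cons hab (.cons hbc .nil))
      (q := .cons hcx.symm .nil) (by simp [hab.ne, hac, hbc.ne]) (by simp [hac])
      fun h => by simpa using congrArg Walk.length h
    simp only [Walk.length_cons, Walk.length_nil] at this
    omega
  · have hq : (Walk.cons hab (.cons hbc (.cons hcx .nil))).IsPath := by
      simp [hab.ne, hac, hax, hbc.ne, hbx, hcx.ne]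
    have := girth_le_card_add_length h ha hx hq (z := b) (by simp) hb
    simp only [Walk.length_cons, Walk.length_nil] at this
    omega

variable (G)

def IsExitSet (v : V) (S : Finset (Sym2 V)) (F : Finset (V × V)) : Prop :=
  ∀ q ∈ F, G.Adj q.1 q.2 ∧ q.1 ∈ rootedVerts v S ∧ q.2 ∉ rootedVerts v S

def nextPairs [Fintype V] [DecidableEq V] [DecidableRel G.Adj] (q : V × V) : Finset (V × V) :=
  ((G.neighborFinset q.2).erase q.1).image (q.2, ·)

/-- The last condition, that edges of `T` leaving the vertex set of `S` are taken along `F`, is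
what makes the two branches of the recursion in `raney_le_ncard_rootedExtensions` disjoint. -/
def rootedExtensions (v : V) (S : Finset (Sym2 V)) (F : Finset (V × V)) (j : ℕ) :
    Set (Finset (Sym2 V)) :=
  {T | S ⊆ T ∧ #T = #S + j ∧ ↑T ⊆ G.edgeSet ∧ (G.rootedSubgraph v T).Connected ∧
    ∀ x y, s(x, y) ∈ T → s(x, y) ∉ S → x ∈ rootedVerts v S → (x, y) ∈ F}

variable {G}

lemma IsExitSet.subset (hF : G.IsExitSet v S F) (h : F' ⊆ F) : G.IsExitSet v S F' :=
  fun q hq => hF q (h hq)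

lemma IsExitSet.mk_notMem (hF : G.IsExitSet v S F) (hab : (a, b) ∈ F) : s(a, b) ∉ S :=
  fun h => (hF _ hab).2.2 (mem_rootedVerts_of_mem h (Sym2.mem_mk_right a b))

lemma rootedExtensions_mono {j : ℕ} (h : F' ⊆ F) :
    G.rootedExtensions v S F' j ⊆ G.rootedExtensions v S F j :=
  fun _ ⟨hST, hcard, hTG, hconn, hexit⟩ =>
    ⟨hST, hcard, hTG, hconn, fun x y hT hS hx => h (hexit x y hT hS hx)⟩

lemma self_mem_rootedExtensions_zero (F : Finset (V × V)) (hS : ↑S ⊆ G.edgeSet)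
    (h : (G.rootedSubgraph v S).Connected) : S ∈ G.rootedExtensions v S F 0 :=
  ⟨subset_rfl, rfl, hS, h, fun _ _ hT hS _ => absurd hT hS⟩

variable [DecidableEq V]

lemma disjoint_rootedExtensions_erase_insert (hF : G.IsExitSet v S F) (hab : (a, b) ∈ F)
    (F' : Finset (V × V)) (j j' : ℕ) :
    Disjoint (G.rootedExtensions v S (F.erase (a, b)) j)
      (G.rootedExtensions v (insert s(a, b) S) F' j') := by
  rw [Set.disjoint_left]
  rintro T ⟨-, -, -, -, hexit⟩ ⟨hST, -⟩
  exact notMem_erase (a, b) F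
    (hexit a b (hST (mem_insert_self _ _)) (hF.mk_notMem hab) (hF _ hab).2.1)

variable [Fintype V] [DecidableRel G.Adj]

lemma mem_nextPairs {q r : V × V} :
    r ∈ G.nextPairs q ↔ r.1 = q.2 ∧ G.Adj q.2 r.2 ∧ r.2 ≠ q.1 := by
  obtain ⟨r₁, r₂⟩ := r
  simp only [nextPairs, mem_image, mem_erase, mem_neighborFinset, Prod.mk.injEq]
  grind

lemma card_nextPairs {m : ℕ} (hreg : G.IsRegularOfDegree m) {q : V × V} (hq : G.Adj q.1 q.2) :
    #(G.nextPairs q) = m - 1 := by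
  rw [nextPairs, card_image_of_injective _ (Prod.mk_right_injective q.2),
    card_erase_of_mem (G.mem_neighborFinset _ _ |>.mpr hq.symm), card_neighborFinset_eq_degree,
    hreg]

lemma IsExitSet.insert_erase_union_nextPairs (hF : G.IsExitSet v S F)
    (hinj : Set.InjOn Prod.snd (F : Set (V × V))) (hab : (a, b) ∈ F) (h : (G.rootedSubgraph v S).Connected) (hgirth : #S + 2 < G.girth) :
    G.IsExitSet v (insert s(a, b) S) (F.erase (a, b) ∪ G.nextPairs (a, b)) := by
  obtain ⟨hadj, ha, hb⟩ := hF _ hab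
  rintro ⟨x, y⟩ hq
  simp only [rootedVerts_insert, Set.mem_union, Set.mem_ofPred_eq, Sym2.mem_iff, not_or]
  rcases mem_union.mp hq with hq | hq
  · obtain ⟨hne, hqF⟩ := mem_erase.mp hq
    obtain ⟨hxy, hx, hy⟩ := hF _ hqF
    exact ⟨hxy, Or.inl hx, hy, fun hya => hy (hya ▸ ha), fun hyb => hne (hinj hqF hab hyb)⟩
  · obtain ⟨rfl, hby, hya⟩ := mem_nextPairs.mp hq
    have hy : y ∉ rootedVerts v S := fun hy =>
      hya (eq_of_adj_of_adj_of_notMem_rootedVerts h hgirth hy ha hb hby.symm hadj)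
    exact ⟨hby, Or.inr (Or.inr rfl), hy, hya, hby.ne'⟩

lemma injOn_snd_erase_union_nextPairs (hF : G.IsExitSet v S F)
    (hinj : Set.InjOn Prod.snd (F : Set (V × V))) (hab : (a, b) ∈ F) (h : (G.rootedSubgraph v S).Connected) (hgirth : #S + 3 < G.girth) :
    Set.InjOn Prod.snd (↑(F.erase (a, b) ∪ G.nextPairs (a, b)) : Set (V × V)) := by
  obtain ⟨hadj, ha, hb⟩ := hF _ hab
  have hcross : ∀ q ∈ F, ∀ r ∈ G.nextPairs (a, b), q.2 ≠ r.2 := by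
    intro q hq r hr hqr
    obtain ⟨hq₁₂, hq₁, hq₂⟩ := hF q hq
    obtain ⟨-, hbr, -⟩ := mem_nextPairs.mp hr
    exact not_adj_of_adj_of_adj_of_notMem_rootedVerts h hgirth ha hb (hqr ▸ hq₂) hq₁ hadj hbr
      (hqr ▸ hq₁₂.symm)
  intro q hq r hr hqr
  simp only [coe_union, coe_erase, Set.mem_union, Set.mem_sdiff, mem_coe] at hq hr
  rcases hq with ⟨hq, -⟩ | hq <;> rcases hr with ⟨hr, -⟩ | hr
  · exact hinj hq hr hqr
  · exact absurd hqr (hcross q hq r hr)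
  · exact absurd hqr.symm (hcross r hr q hq)
  · exact Prod.ext ((mem_nextPairs.mp hq).1.trans (mem_nextPairs.mp hr).1.symm) hqr

lemma card_erase_union_nextPairs {m : ℕ} (hreg : G.IsRegularOfDegree m)
    (hF : G.IsExitSet v S F) (hab : (a, b) ∈ F) :
    #(F.erase (a, b) ∪ G.nextPairs (a, b)) = #F - 1 + (m - 1) := by
  obtain ⟨hadj, -, hb⟩ := hF _ hab
  have hdisj : Disjoint (F.erase (a, b)) (G.nextPairs (a, b)) := Finset.disjoint_left.mpr
    fun q hq hq' => hb ((mem_nextPairs.mp hq').1 ▸ (hF q (mem_of_mem_erase hq)).2.1)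
  rw [card_union_of_disjoint hdisj, card_erase_of_mem hab, card_nextPairs hreg hadj]

lemma rootedExtensions_insert_subset (hF : G.IsExitSet v S F) (hab : (a, b) ∈ F) (j : ℕ) :
    G.rootedExtensions v (insert s(a, b) S) (F.erase (a, b) ∪ G.nextPairs (a, b)) j ⊆
      G.rootedExtensions v S F (j + 1) := by
  obtain ⟨-, -, hb⟩ := hF _ hab
  rintro T ⟨hST, hcard, hTG, hconn, hexit⟩
  refine ⟨(subset_insert _ _).trans hST,
    by rw [hcard, card_insert_of_notMem (hF.mk_notMem hab)]; ring, hTG, hconn,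
    fun x y hT hxyS hx => ?_⟩
  by_cases he : s(x, y) = s(a, b)
  · rcases Sym2.eq_iff.mp he with ⟨rfl, rfl⟩ | ⟨rfl, -⟩
    · exact hab
    · exact absurd hx hb
  · have hxy := hexit x y hT (by simp [he, hxyS]) (by rw [rootedVerts_insert]; exact Or.inl hx)
    rcases mem_union.mp hxy with hxy | hxy
    · exact mem_of_mem_erase hxy
    · exact absurd ((mem_nextPairs.mp hxy).1 ▸ hx) hb

/-- Distinct targets of the exits are needed only while edges remain to be added (`0 < j`): after
the last edge the girth bound no longer provides them. -/
theorem raney_le_ncard_rootedExtensions {m : ℕ} (hreg : G.IsRegularOfDegree m) (v : V) (j : ℕ)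
    (S : Finset (Sym2 V)) (F : Finset (V × V)) (hgirth : #S + j + 2 ≤ G.girth)
    (hS : ↑S ⊆ G.edgeSet) (h : (G.rootedSubgraph v S).Connected) (hF : G.IsExitSet v S F)
    (hinj : 0 < j → Set.InjOn Prod.snd (F : Set (V × V))) :
    Nat.raney (m - 1) #F j ≤ (G.rootedExtensions v S F j).ncard := by
  induction j generalizing S F with
  | zero =>
    rw [Nat.raney_zero_right]
    exact (Set.ncard_pos).mpr ⟨S, self_mem_rootedExtensions_zero F hS h⟩
  | succ j ih =>
    induction F using Finset.strongInduction with
    | H F ihF =>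
    obtain rfl | ⟨⟨a, b⟩, hab⟩ := F.eq_empty_or_nonempty
    · simp
    have hinjF := hinj j.succ_pos
    obtain ⟨hadj, ha, -⟩ := hF _ hab
    have hcard := card_insert_of_notMem (hF.mk_notMem hab)
    set F' := F.erase (a, b) ∪ G.nextPairs (a, b)
    have hdiscard := ihF (F.erase (a, b)) (erase_ssubset hab) (hF.subset (erase_subset _ _))
      fun _ => hinjF.mono (by simp)
    have huse := ih (insert s(a, b) S) F' (by omega)
      (by simpa [Set.insert_subset_iff] using ⟨hadj, hS⟩) (h.rootedSubgraph_insert hadj ha)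
      (hF.insert_erase_union_nextPairs hinjF hab h (by omega))
      fun _ => injOn_snd_erase_union_nextPairs hF hinjF hab h (by omega)
    rw [card_erase_of_mem hab] at hdiscard
    rw [card_erase_union_nextPairs hreg hF hab] at huse
    calc Nat.raney (m - 1) #F (j + 1)
        = Nat.raney (m - 1) (#F - 1) (j + 1) + Nat.raney (m - 1) (#F - 1 + (m - 1)) j := by
          rw [← Nat.raney_succ_succ, Nat.sub_add_cancel (card_pos.mpr ⟨_, hab⟩)]
      _ ≤ (G.rootedExtensions v S (F.erase (a, b)) (j + 1)).ncard +
          (G.rootedExtensions v (insert s(a, b) S) F' j).ncard := Nat.add_le_add hdiscard huse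
      _ = (G.rootedExtensions v S (F.erase (a, b)) (j + 1) ∪
          G.rootedExtensions v (insert s(a, b) S) F' j).ncard :=
          (Set.ncard_union_eq (disjoint_rootedExtensions_erase_insert hF hab _ _ _)).symm
      _ ≤ (G.rootedExtensions v S F (j + 1)).ncard :=
          Set.ncard_le_ncard (Set.union_subset (rootedExtensions_mono (erase_subset _ _))
            (rootedExtensions_insert_subset hF hab j))

theorem raney_le_ncard_connectedEdgeSets_incident {m k : ℕ} (hreg : G.IsRegularOfDegree m)
    (hgirth : k + 2 ≤ G.girth) (hk : 0 < k) (v : V) :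
    Nat.raney (m - 1) m k ≤ {T ∈ G.connectedEdgeSets k | ∃ e ∈ T, v ∈ e}.ncard := by
  set F := (G.neighborFinset v).image (v, ·)
  have hF : #F = m := by
    rw [card_image_of_injective _ (Prod.mk_right_injective v), card_neighborFinset_eq_degree, hreg]
  have hexit : G.IsExitSet v ∅ F := by
    intro q hq
    obtain ⟨b, hb, rfl⟩ := mem_image.mp hq
    rw [mem_neighborFinset] at hb
    simpa using ⟨hb, hb.ne'⟩
  have hinj : Set.InjOn Prod.snd (F : Set (V × V)) := by
    intro q hq r hr hqr
    obtain ⟨_, -, rfl⟩ := mem_image.mp hq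
    obtain ⟨_, -, rfl⟩ := mem_image.mp hr
    simp_all
  have hsub : G.rootedExtensions v ∅ F k ⊆ {T ∈ G.connectedEdgeSets k | ∃ e ∈ T, v ∈ e} := by
    rintro T ⟨-, hcard, hTG, hconn, -⟩
    rw [card_empty, zero_add] at hcard
    have hv := exists_mem_of_connected_rootedSubgraph (card_pos.mp (by omega)) hconn
    exact ⟨⟨hTG, hcard, G.rootedSubgraph v T, rootedVerts_of_mem hv, edgeSet_rootedSubgraph hTG,
      hconn⟩, hv⟩
  calc Nat.raney (m - 1) m k = Nat.raney (m - 1) #F k := by rw [hF]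
    _ ≤ (G.rootedExtensions v ∅ F k).ncard :=
        raney_le_ncard_rootedExtensions hreg v k ∅ F (by simpa using hgirth) (by simp)
          (connected_rootedSubgraph_empty v) hexit fun _ => hinj
    _ ≤ _ := Set.ncard_le_ncard hsub

theorem card_mul_raney_le {m k : ℕ} (hreg : G.IsRegularOfDegree m) (hgirth : k + 2 ≤ G.girth)
    (hk : 0 < k) :
    Fintype.card V * Nat.raney (m - 1) m k ≤ (G.connectedEdgeSets k).ncard * (k + 1) := by
  classical
  rw [← card_univ, Set.ncard_eq_toFinset_card']
  refine card_mul_le_card_mul (fun v T => ∃ e ∈ T, v ∈ e) (fun v _ => ?_) (fun T hT => ?_)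
  · refine (raney_le_ncard_connectedEdgeSets_incident hreg hgirth hk v).trans_eq ?_
    rw [Set.ncard_eq_toFinset_card']
    congr 1
    ext T
    simp [bipartiteAbove]
  · refine le_of_eq_of_le ?_ (ncard_incident_le_of_mem_connectedEdgeSets (Set.mem_toFinset.mp hT))
    rw [Set.ncard_eq_toFinset_card']
    congr 1
    ext x
    simp [bipartiteBelow]

end SimpleGraph

theorem count_connected_edge_subsets_lower_bound_general
    {V : Type*} [Fintype V]
    (G : SimpleGraph V) [DecidableRel G.Adj]
    (m δ k : ℕ) (hm : 3 ≤ m) (hreg : G.IsRegularOfDegree m)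
    (hgirth : (δ + 2 : ℕ∞) ≤ G.girth)
    (hk1 : 1 ≤ k) (hkδ : k ≤ δ) :
    ((Fintype.card V : ℝ) / (k + 1)) *
        ((m : ℝ) / k * (Nat.choose ((m - 1) * (k + 1)) (k - 1) : ℝ)) ≤
      (Nat.card {T : Finset (Sym2 V) | ↑T ⊆ G.edgeSet ∧ T.card = k ∧
        ∃ C : G.Subgraph, C.verts = {v : V | ∃ e ∈ T, v ∈ e} ∧
          C.edgeSet = ↑T ∧ C.Connected} : ℝ) := by
  classical
  have hkgirth : k + 2 ≤ G.girth := by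
    have : ((k + 2 : ℕ) : ℕ∞) ≤ G.girth := le_trans (by push_cast; gcongr) hgirth
    exact_mod_cast this
  have hcount := G.card_mul_raney_le hreg hkgirth hk1
  have hraney : (m : ℝ) / k * ((m - 1) * (k + 1)).choose (k - 1) = Nat.raney (m - 1) m k := by
    rw [div_mul_eq_mul_div, div_eq_iff (by positivity)]
    exact_mod_cast (Nat.mul_raney_eq (by omega) hk1).symm.trans (mul_comm _ _)
  change _ ≤ (Nat.card (G.connectedEdgeSets k) : ℝ)
  rw [hraney, Nat.card_coe_set_eq, div_mul_eq_mul_div, div_le_iff₀ (by positivity)]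
  exact_mod_cast hcount

theorem count_connected_edge_subsets_lower_bound
    {V : Type*} [Fintype V] [DecidableEq V]
    (G : SimpleGraph V) [DecidableRel G.Adj]
    (m δ k : ℕ) (hm : 3 ≤ m) (hreg : G.IsRegularOfDegree m)
    (hgirth : (δ + 2 : ℕ∞) ≤ G.girth)
    (hk1 : 1 ≤ k) (hkδ : k ≤ δ) :
    ((Fintype.card V : ℝ) / (k + 1)) *
        ((m : ℝ) / k * (Nat.choose ((m - 1) * (k + 1)) (k - 1) : ℝ)) ≤
      (Nat.card {T : Finset (Sym2 V) | ↑T ⊆ G.edgeSet ∧ T.card = k ∧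
        ∃ C : G.Subgraph, C.verts = {v : V | ∃ e ∈ T, v ∈ e} ∧
          C.edgeSet = ↑T ∧ C.Connected} : ℝ) :=
  count_connected_edge_subsets_lower_bound_general G m δ k hm hreg hgirth hk1 hkδ
end

section
/- (Proposition: code improvement / existence of an improved CSS code.) Let m ≥ 5 with m dividing 2n, and let H_X, H_Z be binary matrices with n columns such that every row of H_X is orthogonal (standard inner product over F₂) to every row of H_Z and rank(H_X) = rank(H_Z) = 2n/m − 1. Set R = 1 − 4/m + 2/n. Suppose ρ ∈ (0, 1/2) and a ∈ ℕ satisfy h(ρ) < a/n < R/2, where h(x) = −x·log₂x − (1−x)·log₂(1−x) is the binary entropy function. Then there exist F₂-subspaces V_X and V_Z of F₂^n with: rowspace(H_X) ⊆ V_X ⊆ Ker(H_Z), rowspace(H_Z) ⊆ V_Z ⊆ Ker(H_X), dim V_X = rank(H_X) + a, dim V_Z = rank(H_Z) + a, and every vector v lying in (V_X^⊥ \ V_Z) ∪ (V_Z^⊥ \ V_X) has Hamming weight at least ρ·n. -/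
open Finset

/-- The binary entropy function. -/
noncomputable def binEntropy (x : ℝ) : ℝ :=
  -x * Real.logb 2 x - (1 - x) * Real.logb 2 (1 - x)

/-- The Hamming weight of a binary vector. -/
def hwt {n : ℕ} (v : Fin n → ZMod 2) : ℕ :=
  (Finset.univ.filter fun i => v i ≠ 0).card

/-!
Call `v` light if `hwt v < ρ n`. Giving each `v` the mass `ρ ^ wt v * (1 - ρ) ^ (n - wt v)`
(total mass `1`), every light vector has mass at least `2 ^ (-h(ρ) n)`, so there are fewer than
`2 ^ a` light vectors.

A light `v ∉ rowspace(H_Z) = Ker(H_Z)^⊥` is orthogonal to exactly half of `Ker(H_Z)`, so averaging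
over `Ker(H_Z)` yields a `w ∉ V_X` orthogonal to at most half of the light vectors that are still
orthogonal to `V_X`. Starting from `V_X = rowspace(H_X)` and adding such a `w` `a` times leaves no
light vector outside `rowspace(H_Z) ⊆ V_Z` orthogonal to `V_X`; the bound `a / n < R / 2`
guarantees that `Ker(H_Z)` has room for the `a` new dimensions. `V_Z` is built symmetrically.
-/

open Module

lemma binEntropy_eq_binEntropy_div_log_two (x : ℝ) :
    binEntropy x = Real.binEntropy x / Real.log 2 := by
  simp only [binEntropy, Real.binEntropy, Real.logb, Real.log_inv]
  ring

lemma binEntropy_nonneg {x : ℝ} (hx₀ : 0 ≤ x) (hx₁ : x ≤ 1) : 0 ≤ binEntropy x := by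
  rw [binEntropy_eq_binEntropy_div_log_two]
  exact div_nonneg (Real.binEntropy_nonneg hx₀ hx₁) (Real.log_nonneg one_le_two)

lemma sum_pow_hwt_mul_pow_sub_hwt (n : ℕ) (ρ : ℝ) :
    ∑ v : Fin n → ZMod 2, ρ ^ hwt v * (1 - ρ) ^ (n - hwt v) = 1 := by
  have hprod (v : Fin n → ZMod 2) :
      ρ ^ hwt v * (1 - ρ) ^ (n - hwt v) = ∏ i, if v i = 0 then 1 - ρ else ρ := by
    have hzero : #{i | v i = 0} = n - hwt v := by
      have := card_filter_add_card_filter_not (s := univ) fun i => v i = 0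
      rw [card_univ, Fintype.card_fin] at this
      simp only [hwt, ne_eq]
      omega
    rw [prod_ite, prod_const, prod_const, hzero, mul_comm]
    rfl
  rw [sum_congr rfl fun v _ => hprod v,
    ← Fintype.prod_sum fun _ (x : ZMod 2) => if x = 0 then 1 - ρ else ρ]
  simp [ZMod, Fin.sum_univ_two]

lemma two_rpow_neg_binEntropy_mul_le {ρ : ℝ} (hρ0 : 0 < ρ) (hρ : ρ ≤ 1 / 2) {n j : ℕ}
    (hj : (j : ℝ) ≤ ρ * n) :
    (2 : ℝ) ^ (-(binEntropy ρ * n)) ≤ ρ ^ j * (1 - ρ) ^ (n - j) := by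
  have hjn : j ≤ n := by
    have : ρ * n ≤ n := by nlinarith [(Nat.cast_nonneg n : (0 : ℝ) ≤ n)]
    exact_mod_cast hj.trans this
  have hρ1 : 0 < 1 - ρ := by linarith
  rw [← Real.log_le_log_iff (by positivity) (by positivity), Real.log_rpow two_pos,
    Real.log_mul (by positivity) (by positivity), Real.log_pow, Real.log_pow,
    Nat.cast_sub hjn, binEntropy_eq_binEntropy_div_log_two, div_mul_eq_mul_div, neg_mul,
    div_mul_cancel₀ _ (Real.log_pos one_lt_two).ne', Real.binEntropy, Real.log_inv, Real.log_inv]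
  have : Real.log ρ ≤ Real.log (1 - ρ) := Real.log_le_log hρ0 (by linarith)
  nlinarith

lemma card_filter_hwt_lt_lt_two_pow {n a : ℕ} {ρ : ℝ} (hρ0 : 0 < ρ) (hρ : ρ ≤ 1 / 2)
    (ha : binEntropy ρ * n < a) :
    #{v : Fin n → ZMod 2 | (hwt v : ℝ) < ρ * n} < 2 ^ a := by
  set S := ({v : Fin n → ZMod 2 | (hwt v : ℝ) < ρ * n} : Finset _)
  have hS : #S * (2 : ℝ) ^ (-(binEntropy ρ * n)) ≤ 1 :=
    calc #S * (2 : ℝ) ^ (-(binEntropy ρ * n))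
        = ∑ v ∈ S, (2 : ℝ) ^ (-(binEntropy ρ * n)) := by rw [sum_const, nsmul_eq_mul]
      _ ≤ ∑ v ∈ S, ρ ^ hwt v * (1 - ρ) ^ (n - hwt v) :=
          sum_le_sum fun v hv => two_rpow_neg_binEntropy_mul_le hρ0 hρ (mem_filter.1 hv).2.le
      _ ≤ ∑ v, ρ ^ hwt v * (1 - ρ) ^ (n - hwt v) :=
          sum_le_sum_of_subset_of_nonneg (subset_univ S) fun v _ _ => by
            have : 0 < 1 - ρ := by linarith
            positivity
      _ = 1 := sum_pow_hwt_mul_pow_sub_hwt n ρ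
  rw [Real.rpow_neg zero_le_two, ← div_eq_mul_inv, div_le_one (by positivity)] at hS
  have : (2 : ℝ) ^ (binEntropy ρ * n) < 2 ^ a := by
    rw [← Real.rpow_natCast]
    exact Real.rpow_lt_rpow_of_exponent_lt one_lt_two ha
  exact_mod_cast hS.trans_lt this

section DotProduct

variable {ι : Type*} [Fintype ι] [DecidableEq ι]

lemma exists_mem_ker_mulVecLin_dotProduct_ne_zero {K m : Type*} [Field K] (H : Matrix m ι K)
    {v : ι → K} (hv : v ∉ Submodule.span K (Set.range H.row)) :
    ∃ w ∈ LinearMap.ker H.mulVecLin, v ⬝ᵥ w ≠ 0 := by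
  obtain ⟨f, hfv, hf⟩ := Submodule.exists_le_ker_of_notMem hv
  have hfw (x : ι → K) : f x = x ⬝ᵥ (dotProductEquiv K ι).symm f := by
    rw [dotProduct_comm, ← dotProductEquiv_apply_apply, LinearEquiv.apply_symm_apply]
  refine ⟨(dotProductEquiv K ι).symm f, ?_, by rwa [← hfw]⟩
  ext i
  rw [Matrix.mulVecLin_apply, Matrix.mulVec, Pi.zero_apply, ← hfw]
  exact hf (Submodule.subset_span ⟨i, rfl⟩)

lemma two_mul_card_dotProduct_eq_zero {K : Submodule (ZMod 2) (ι → ZMod 2)}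
    {v w₀ : ι → ZMod 2} (hw₀ : w₀ ∈ K) (hv : v ⬝ᵥ w₀ ≠ 0) :
    2 * Nat.card {w : K // v ⬝ᵥ w = 0} = Nat.card K := by
  let f : Dual (ZMod 2) K := (dotProductEquiv (ZMod 2) ι v).comp K.subtype
  have hf : f ≠ 0 := fun h => hv (LinearMap.congr_fun h ⟨w₀, hw₀⟩)
  have hsurj : Function.Surjective f :=
    LinearMap.range_eq_top.mp (Module.Dual.range_eq_top_of_ne_zero hf)
  rw [← f.toAddMonoidHom.ker.card_mul_index, AddSubgroup.index_ker,
    AddMonoidHom.range_eq_top_of_surjective _ hsurj, AddSubgroup.card_top, Nat.card_zmod, mul_comm]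
  rfl

lemma exists_mem_notMem_two_mul_card_filter_le {W K : Submodule (ZMod 2) (ι → ZMod 2)}
    (hWK : W < K) {B : Finset (ι → ZMod 2)} (hBW : ∀ v ∈ B, ∀ u ∈ W, v ⬝ᵥ u = 0)
    (hBK : ∀ v ∈ B, ∃ w ∈ K, v ⬝ᵥ w ≠ 0) :
    ∃ w ∈ K, w ∉ W ∧ 2 * #{v ∈ B | v ⬝ᵥ w = 0} ≤ #B := by
  classical
  by_contra! h
  obtain ⟨w₀, hw₀K, hw₀W⟩ := SetLike.exists_of_lt hWK
  have hB : 0 < #B := by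
    have := h w₀ hw₀K hw₀W
    have := card_filter_le B fun v => v ⬝ᵥ w₀ = 0
    omega
  have hlt (w : K) : #B < 2 * #{v ∈ B | v ⬝ᵥ w = 0} := by
    by_cases hwW : (w : ι → ZMod 2) ∈ W
    · rw [filter_true_of_mem fun v hv => hBW v hv w hwW]
      omega
    · exact h w w.2 hwW
  have hcount : ∑ w : K, 2 * #{v ∈ B | v ⬝ᵥ w = 0} = ∑ v ∈ B, Nat.card K :=
    calc ∑ w : K, 2 * #{v ∈ B | v ⬝ᵥ w = 0}
        = ∑ v ∈ B, 2 * #{w : K | v ⬝ᵥ w = 0} := by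
          simp only [← mul_sum, card_filter]
          rw [sum_comm]
      _ = ∑ v ∈ B, Nat.card K := sum_congr rfl fun v hv => by
          obtain ⟨w, hwK, hvw⟩ := hBK v hv
          rw [← two_mul_card_dotProduct_eq_zero hwK hvw, Nat.card_eq_fintype_card,
            Fintype.card_subtype]
  have := sum_lt_sum_of_nonempty univ_nonempty fun w _ => hlt w
  rw [hcount, sum_const, sum_const, card_univ, ← Nat.card_eq_fintype_card, smul_eq_mul,
    smul_eq_mul, mul_comm] at this
  exact this.false

lemma exists_le_finrank_eq_forall_exists_dotProduct_ne_zero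
    {W K : Submodule (ZMod 2) (ι → ZMod 2)} {B : Finset (ι → ZMod 2)} (a : ℕ) (hWK : W ≤ K)
    (hdim : finrank (ZMod 2) W + a ≤ finrank (ZMod 2) K) (hB : #B < 2 ^ a)
    (hBW : ∀ v ∈ B, ∀ u ∈ W, v ⬝ᵥ u = 0) (hBK : ∀ v ∈ B, ∃ w ∈ K, v ⬝ᵥ w ≠ 0) :
    ∃ V, W ≤ V ∧ V ≤ K ∧ finrank (ZMod 2) V = finrank (ZMod 2) W + a ∧
      ∀ v ∈ B, ∃ w ∈ V, v ⬝ᵥ w ≠ 0 := by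
  induction a generalizing W B with
  | zero =>
    rw [pow_zero, Nat.lt_one_iff, card_eq_zero] at hB
    exact ⟨W, le_rfl, hWK, rfl, by simp [hB]⟩
  | succ a ih =>
    have hWK' : W < K := Submodule.lt_of_le_of_finrank_lt_finrank hWK (by omega)
    obtain ⟨w, hwK, hwW, hhalf⟩ := exists_mem_notMem_two_mul_card_filter_le hWK' hBW hBK
    have hB' : #{v ∈ B | v ⬝ᵥ w = 0} < 2 ^ a := by
      rw [pow_succ] at hB
      omega
    have hBW' : ∀ v ∈ ({v ∈ B | v ⬝ᵥ w = 0} : Finset _), ∀ u ∈ W ⊔ Submodule.span (ZMod 2) {w},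
        v ⬝ᵥ u = 0 := by
      intro v hv u hu
      obtain ⟨hvB, hvw⟩ := mem_filter.1 hv
      obtain ⟨x, hx, y, hy, rfl⟩ := Submodule.mem_sup.1 hu
      obtain ⟨c, rfl⟩ := Submodule.mem_span_singleton.1 hy
      rw [dotProduct_add, dotProduct_smul, hvw, hBW v hvB x hx, smul_zero, add_zero]
    obtain ⟨V, hWV, hVK, hdimV, hV⟩ := ih
      (sup_le hWK ((Submodule.span_singleton_le_iff_mem w K).2 hwK))
      (by rw [Submodule.finrank_sup_span_singleton hwW]; omega) hB' hBW'
      fun v hv => hBK v (mem_filter.1 hv).1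
    refine ⟨V, le_sup_left.trans hWV, hVK, by
      rw [hdimV, Submodule.finrank_sup_span_singleton hwW, add_right_comm, add_assoc], ?_⟩
    intro v hv
    by_cases hvw : v ⬝ᵥ w = 0
    · exact hV v (mem_filter.2 ⟨hv, hvw⟩)
    · exact ⟨w, hWV (Submodule.mem_sup_right (Submodule.mem_span_singleton_self w)), hvw⟩

end DotProduct

section Matrix

variable {ι m : Type*} [Fintype ι]

lemma span_range_row_le_ker_mulVecLin {R l : Type*} [CommSemiring R] {A : Matrix l ι R}
    {B : Matrix m ι R} (h : ∀ a b, A a ⬝ᵥ B b = 0) :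
    Submodule.span R (Set.range A.row) ≤ LinearMap.ker B.mulVecLin := by
  rw [Submodule.span_le]
  rintro _ ⟨a, rfl⟩
  ext b
  rw [Matrix.mulVecLin_apply, Pi.zero_apply, Matrix.mulVec, dotProduct_comm]
  exact h a b

lemma finrank_ker_mulVecLin {K : Type*} [Field K] (H : Matrix m ι K) :
    finrank K (LinearMap.ker H.mulVecLin) = Fintype.card ι - H.rank := by
  have := LinearMap.finrank_range_add_finrank_ker H.mulVecLin
  rw [finrank_fintype_fun_eq_card] at this
  rw [Matrix.rank]
  omega

variable [DecidableEq ι]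

lemma exists_le_ker_mulVecLin_forall_exists_dotProduct_ne_zero (H : Matrix m ι (ZMod 2))
    {U : Submodule (ZMod 2) (ι → ZMod 2)} (hU : U ≤ LinearMap.ker H.mulVecLin) {a : ℕ}
    (hdim : finrank (ZMod 2) U + a ≤ finrank (ZMod 2) (LinearMap.ker H.mulVecLin))
    {B : Finset (ι → ZMod 2)} (hcard : #B < 2 ^ a)
    (hB : ∀ v ∈ B, v ∉ Submodule.span (ZMod 2) (Set.range H.row)) :
    ∃ V, U ≤ V ∧ V ≤ LinearMap.ker H.mulVecLin ∧ finrank (ZMod 2) V = finrank (ZMod 2) U + a ∧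
      ∀ v ∈ B, ∃ w ∈ V, v ⬝ᵥ w ≠ 0 := by
  classical
  obtain ⟨V, hUV, hVK, hdimV, hV⟩ :=
    exists_le_finrank_eq_forall_exists_dotProduct_ne_zero a hU hdim
      (B := {v ∈ B | ∀ u ∈ U, v ⬝ᵥ u = 0}) ((card_filter_le _ _).trans_lt hcard)
      (fun v hv => (mem_filter.1 hv).2)
      fun v hv => exists_mem_ker_mulVecLin_dotProduct_ne_zero H (hB v (mem_filter.1 hv).1)
  refine ⟨V, hUV, hVK, hdimV, fun v hv => ?_⟩
  by_cases hvU : ∀ u ∈ U, v ⬝ᵥ u = 0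
  · exact hV v (mem_filter.2 ⟨hv, hvU⟩)
  · push Not at hvU
    obtain ⟨u, hu, hvu⟩ := hvU
    exact ⟨u, hUV hu, hvu⟩

end Matrix

lemma two_mul_div_sub_one_add_le_of_lt_rate {n m a : ℕ} (hdvd : m ∣ 2 * n) (hn : 0 < n)
    (ha : (a : ℝ) / n < (1 - 4 / (m : ℝ) + 2 / (n : ℝ)) / 2) :
    2 * n / m - 1 + a ≤ n - (2 * n / m - 1) := by
  obtain ⟨q, hq⟩ := hdvd
  have hm : 0 < m := Nat.pos_of_ne_zero (by rintro rfl; omega)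
  rw [hq, Nat.mul_div_cancel_left q hm]
  have hqR : (2 * n : ℝ) = m * q := by exact_mod_cast hq
  have : (2 * a + 2 * q : ℝ) < n + 2 := by
    rw [div_lt_iff₀ (by positivity)] at ha
    field_simp at ha
    nlinarith
  have : 2 * a + 2 * q < n + 2 := by exact_mod_cast this
  omega

theorem css_code_improvement_general
    {rX rZ n m : ℕ} (hdvd : m ∣ 2 * n)
    (HX : Matrix (Fin rX) (Fin n) (ZMod 2)) (HZ : Matrix (Fin rZ) (Fin n) (ZMod 2))
    (horth : ∀ (a : Fin rX) (b : Fin rZ), ∑ i : Fin n, HX a i * HZ b i = 0)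
    (hrX : HX.rank = 2 * n / m - 1) (hrZ : HZ.rank = 2 * n / m - 1)
    (R : ℝ) (hRdef : R = 1 - 4 / (m : ℝ) + 2 / (n : ℝ))
    (ρ : ℝ) (hρ : ρ ∈ Set.Ioo (0 : ℝ) (1 / 2)) (a : ℕ)
    (ha1 : binEntropy ρ < (a : ℝ) / n) (ha2 : (a : ℝ) / n < R / 2) :
    ∃ VX VZ : Submodule (ZMod 2) (Fin n → ZMod 2),
      Submodule.span (ZMod 2) (Set.range fun i => HX i) ≤ VX ∧
      VX ≤ LinearMap.ker HZ.mulVecLin ∧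
      Submodule.span (ZMod 2) (Set.range fun i => HZ i) ≤ VZ ∧
      VZ ≤ LinearMap.ker HX.mulVecLin ∧
      Module.finrank (ZMod 2) VX = HX.rank + a ∧
      Module.finrank (ZMod 2) VZ = HZ.rank + a ∧
      ∀ v : Fin n → ZMod 2,
        (((∀ y ∈ VX, ∑ i : Fin n, v i * y i = 0) ∧ v ∉ VZ) ∨
          ((∀ y ∈ VZ, ∑ i : Fin n, v i * y i = 0) ∧ v ∉ VX)) →
        ρ * n ≤ (hwt v : ℝ) := by
  obtain ⟨hρ0, hρ1⟩ := hρ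
  have hn : 0 < n := Nat.pos_of_ne_zero fun h => by
    simp only [h, CharP.cast_eq_zero, div_zero] at ha1
    exact ha1.not_ge (binEntropy_nonneg hρ0.le (by linarith))
  have hlow := card_filter_hwt_lt_lt_two_pow hρ0 hρ1.le ((lt_div_iff₀ (by positivity)).1 ha1)
  classical
  have hbad (S : Submodule (ZMod 2) (Fin n → ZMod 2)) :
      #{v | (hwt v : ℝ) < ρ * n ∧ v ∉ S} < 2 ^ a :=
    (card_le_card (monotone_filter_right _ fun _ _ hv => hv.1)).trans_lt hlow
  have hdim := two_mul_div_sub_one_add_le_of_lt_rate hdvd hn (hRdef ▸ ha2)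
  obtain ⟨VX, hX₁, hX₂, hX₃, hX₄⟩ := exists_le_ker_mulVecLin_forall_exists_dotProduct_ne_zero HZ
    (span_range_row_le_ker_mulVecLin horth)
    (by rw [finrank_ker_mulVecLin, ← HX.rank_eq_finrank_span_row, hrX, hrZ, Fintype.card_fin]
        exact hdim)
    (hbad (Submodule.span (ZMod 2) (Set.range HZ.row))) fun v hv => (mem_filter.1 hv).2.2
  obtain ⟨VZ, hZ₁, hZ₂, hZ₃, hZ₄⟩ := exists_le_ker_mulVecLin_forall_exists_dotProduct_ne_zero HX
    (span_range_row_le_ker_mulVecLin fun a b => (dotProduct_comm _ _).trans (horth b a))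
    (by rw [finrank_ker_mulVecLin, ← HZ.rank_eq_finrank_span_row, hrX, hrZ, Fintype.card_fin]
        exact hdim)
    (hbad (Submodule.span (ZMod 2) (Set.range HX.row))) fun v hv => (mem_filter.1 hv).2.2
  refine ⟨VX, VZ, hX₁, hX₂, hZ₁, hZ₂, by rw [hX₃, HX.rank_eq_finrank_span_row],
    by rw [hZ₃, HZ.rank_eq_finrank_span_row], ?_⟩
  rintro v (⟨hvX, hvZ⟩ | ⟨hvZ, hvX⟩) <;> by_contra! hlt
  · obtain ⟨w, hw, hvw⟩ := hX₄ v (mem_filter.2 ⟨mem_univ v, hlt, fun h => hvZ (hZ₁ h)⟩)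
    exact hvw (hvX w hw)
  · obtain ⟨w, hw, hvw⟩ := hZ₄ v (mem_filter.2 ⟨mem_univ v, hlt, fun h => hvX (hX₁ h)⟩)
    exact hvw (hvZ w hw)

theorem css_code_improvement
    {rX rZ n m : ℕ} (hm : 5 ≤ m) (hdvd : m ∣ 2 * n)
    (HX : Matrix (Fin rX) (Fin n) (ZMod 2)) (HZ : Matrix (Fin rZ) (Fin n) (ZMod 2))
    (horth : ∀ (a : Fin rX) (b : Fin rZ), ∑ i : Fin n, HX a i * HZ b i = 0)
    (hrX : HX.rank = 2 * n / m - 1) (hrZ : HZ.rank = 2 * n / m - 1)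
    (R : ℝ) (hRdef : R = 1 - 4 / (m : ℝ) + 2 / (n : ℝ))
    (ρ : ℝ) (hρ : ρ ∈ Set.Ioo (0 : ℝ) (1 / 2)) (a : ℕ)
    (ha1 : binEntropy ρ < (a : ℝ) / n) (ha2 : (a : ℝ) / n < R / 2) :
    ∃ VX VZ : Submodule (ZMod 2) (Fin n → ZMod 2),
      Submodule.span (ZMod 2) (Set.range fun i => HX i) ≤ VX ∧
      VX ≤ LinearMap.ker HZ.mulVecLin ∧
      Submodule.span (ZMod 2) (Set.range fun i => HZ i) ≤ VZ ∧
      VZ ≤ LinearMap.ker HX.mulVecLin ∧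
      Module.finrank (ZMod 2) VX = HX.rank + a ∧
      Module.finrank (ZMod 2) VZ = HZ.rank + a ∧
      ∀ v : Fin n → ZMod 2,
        (((∀ y ∈ VX, ∑ i : Fin n, v i * y i = 0) ∧ v ∉ VZ) ∨
          ((∀ y ∈ VZ, ∑ i : Fin n, v i * y i = 0) ∧ v ∉ VX)) →
        ρ * n ≤ (hwt v : ℝ) :=
  css_code_improvement_general hdvd HX HZ horth hrX hrZ R hRdef ρ hρ a ha1 ha2
end
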